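/- arXiv:2212.00412 — 5 statements merged into one kernel-verified Lean document; each statement's English description precedes it below -/
import Mathlib

section
/- Under the hypotheses of the previous transport identity, if K: 𝕋^{d-1}×𝕋^ℓ → U satisfies the invariance φ_T(K(θ,φ),φ) = K(θ+ω, φ+α), then the vector field on the torus X_H^K(θ,φ) := X_H(K(θ,φ),φ) − D_φK(θ,φ)·α̂ is invariant under the linearized time-T map: D_zφ_T(K(θ,φ),φ)·X_H^K(θ,φ) = X_H^K(θ+ω, φ+α), where α = α̂T. -/
/-!
Write `Dφ_T` for the full derivative of the time-`T` map at `(K(θ,φ),φ)`. Then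
`D_zφ_T u = Dφ_T (u, 0)` and `(X_H − D_φK α̂, 0) = (X_H, α̂) − (D_φK α̂, α̂)`, so it suffices to
evaluate `Dφ_T` on both pairs. Each is the velocity of a curve through `(K(θ,φ),φ)`: differentiating
at `t = 0` the commutation of `φ_T` with the flow gives the transport identity
`Dφ_T (X_H, α̂) = X_H ∘ (φ_T, shift)`, and differentiating the invariance equation along `φ + tα̂`
gives `Dφ_T (D_φK α̂, α̂) = D_φK(θ+ω, φ+α) α̂`.
-/

open ContinuousLinearMap

section

variable {𝕜 : Type*} [NontriviallyNormedField 𝕜]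
  {E F P Θ : Type*} [NormedAddCommGroup E] [NormedSpace 𝕜 E] [NormedAddCommGroup F]
  [NormedSpace 𝕜 F] [NormedAddCommGroup P] [NormedSpace 𝕜 P] [NormedAddCommGroup Θ]
  [NormedSpace 𝕜 Θ]

theorem fderiv_apply_eq_of_hasDerivAt_comp {f : E → F} {γ : 𝕜 → E} {t : 𝕜} {x v : E} {w : F}
    (hf : DifferentiableAt 𝕜 f x) (hγt : γ t = x) (hγ : HasDerivAt γ v t)
    (hfγ : HasDerivAt (fun s => f (γ s)) w t) : fderiv 𝕜 f x v = w := by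
  subst hγt
  exact (hf.hasFDerivAt.comp_hasDerivAt t hγ).unique hfγ

theorem hasDerivAt_add_smul (x v : E) : HasDerivAt (fun t : 𝕜 => x + t • v) v 0 :=
  (hasFDerivAt_id (𝕜 := 𝕜) x).hasLineDerivAt v

theorem fderiv_comp_prodMk_left_apply {f : E × P → F} {z : E} {φ : P}
    (hf : DifferentiableAt 𝕜 f (z, φ)) (u : E) :
    fderiv 𝕜 (fun z' => f (z', φ)) z u = fderiv 𝕜 f (z, φ) (u, 0) := by
  have hcomp : HasFDerivAt (fun z' => f (z', φ)) ((fderiv 𝕜 f (z, φ)).comp (inl 𝕜 E P)) z :=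
    hf.hasFDerivAt.comp z (hasFDerivAt_prodMk_left z φ)
  rw [hcomp.fderiv]
  rfl

theorem fderiv_apply_partialDeriv_of_invariant {F : E × P → E} {K : Θ × P → E} {ω : Θ} {a : P}
    (hinv : ∀ θ φ, F (K (θ, φ), φ) = K (θ + ω, φ + a)) (hK : Differentiable 𝕜 K)
    {θ : Θ} {φ : P} (hF : DifferentiableAt 𝕜 F (K (θ, φ), φ)) (v : P) :
    fderiv 𝕜 F (K (θ, φ), φ) (fderiv 𝕜 (fun φ' => K (θ, φ')) φ v, v)
      = fderiv 𝕜 (fun φ' => K (θ + ω, φ')) (φ + a) v := by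
  have hpartial (θ' : Θ) (φ' : P) : DifferentiableAt 𝕜 (fun φ'' => K (θ', φ'')) φ' :=
    hK.differentiableAt.comp φ' (differentiableAt_const θ' |>.prodMk differentiableAt_id)
  refine fderiv_apply_eq_of_hasDerivAt_comp (γ := fun t : 𝕜 => (K (θ, φ + t • v), φ + t • v))
    (t := 0) hF (by simp)
    (((hpartial θ φ).hasFDerivAt.hasLineDerivAt v).prodMk (hasDerivAt_add_smul φ v)) ?_
  simp_rw [hinv, add_right_comm φ _ a]
  exact (hpartial (θ + ω) (φ + a)).hasFDerivAt.hasLineDerivAt v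

end

theorem fderiv_timeMap_apply_vectorField {E P : Type*} [NormedAddCommGroup E] [NormedSpace ℝ E]
    [NormedAddCommGroup P] [NormedSpace ℝ P] {ev : ℝ → E × P → E} {X : E → P → E} {a : P}
    {T : ℝ} (h0 : ∀ p, ev 0 p = p.1) (hX : ∀ p, HasDerivAt (fun s => ev s p) (X p.1 p.2) 0)
    (hcomm : ∀ t z φ, ev T (ev t (z, φ), φ + t • a) = ev t (ev T (z, φ), φ + T • a))
    {z : E} {φ : P} (hT : DifferentiableAt ℝ (ev T) (z, φ)) :
    fderiv ℝ (ev T) (z, φ) (X z φ, a) = X (ev T (z, φ)) (φ + T • a) := by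
  refine fderiv_apply_eq_of_hasDerivAt_comp (γ := fun t => (ev t (z, φ), φ + t • a)) (t := 0)
    hT (by simp [h0]) ((hX (z, φ)).prodMk (hasDerivAt_add_smul φ a)) ?_
  simp_rw [hcomm]
  exact hX _

theorem adapted_vector_field_invariance_general
    (N m ℓ : ℕ) (T : ℝ) (αhat : Fin ℓ → ℝ) (ω : Fin m → ℝ)
    (XH : (Fin N → ℝ) → (Fin ℓ → ℝ) → (Fin N → ℝ))
    (ev : ℝ → ((Fin N → ℝ) × (Fin ℓ → ℝ)) → (Fin N → ℝ))
    (h0 : ∀ p : (Fin N → ℝ) × (Fin ℓ → ℝ), ev 0 p = p.1)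
    (hode : ∀ (t : ℝ) (p : (Fin N → ℝ) × (Fin ℓ → ℝ)),
      HasDerivAt (fun s => ev s p) (XH (ev t p) (p.2 + t • αhat)) t)
    (hdiff : Differentiable ℝ (ev T))
    (hcomm : ∀ (t : ℝ) (z : Fin N → ℝ) (φv : Fin ℓ → ℝ),
      ev T (ev t (z, φv), φv + t • αhat) = ev t (ev T (z, φv), φv + T • αhat))
    (K : (Fin m → ℝ) × (Fin ℓ → ℝ) → (Fin N → ℝ)) (hK : ContDiff ℝ 1 K)
    (hinv : ∀ (θ : Fin m → ℝ) (φv : Fin ℓ → ℝ),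
      ev T (K (θ, φv), φv) = K (θ + ω, φv + T • αhat)) :
    ∀ (θ : Fin m → ℝ) (φv : Fin ℓ → ℝ),
      fderiv ℝ (fun z => ev T (z, φv)) (K (θ, φv))
          (XH (K (θ, φv)) φv - fderiv ℝ (fun φ' => K (θ, φ')) φv αhat)
        = XH (K (θ + ω, φv + T • αhat)) (φv + T • αhat)
          - fderiv ℝ (fun φ' => K (θ + ω, φ')) (φv + T • αhat) αhat := by
  intro θ φv
  have hX : ∀ p : (Fin N → ℝ) × (Fin ℓ → ℝ), HasDerivAt (fun s => ev s p) (XH p.1 p.2) 0 :=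
    fun p => by simpa [h0] using hode 0 p
  have hF := hdiff (K (θ, φv), φv)
  have htransport := fderiv_timeMap_apply_vectorField h0 hX hcomm hF
  have hshift :=
    fderiv_apply_partialDeriv_of_invariant hinv (hK.differentiable one_ne_zero) hF αhat
  rw [hinv] at htransport
  rw [fderiv_comp_prodMk_left_apply hF, ← htransport, ← hshift, ← map_sub, Prod.mk_sub_mk,
    sub_self]

/-- invariance under the linearized time-`T` map of the adapted
vector field `X_H^K(θ,φ) = X_H(K(θ,φ),φ) − D_φK(θ,φ)·α̂` on an invariant torus:
`D_zφ_T(K(θ,φ),φ)·X_H^K(θ,φ) = X_H^K(θ+ω, φ+α)` with `α = T·α̂`. -/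
theorem adapted_vector_field_invariance
    (N m ℓ : ℕ) (T : ℝ) (αhat : Fin ℓ → ℝ) (ω : Fin m → ℝ)
    (XH : (Fin N → ℝ) → (Fin ℓ → ℝ) → (Fin N → ℝ))
    (hXH : Continuous fun q : (Fin N → ℝ) × (Fin ℓ → ℝ) => XH q.1 q.2)
    (ev : ℝ → ((Fin N → ℝ) × (Fin ℓ → ℝ)) → (Fin N → ℝ))
    (h0 : ∀ p : (Fin N → ℝ) × (Fin ℓ → ℝ), ev 0 p = p.1)
    (hode : ∀ (t : ℝ) (p : (Fin N → ℝ) × (Fin ℓ → ℝ)),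
      HasDerivAt (fun s => ev s p) (XH (ev t p) (p.2 + t • αhat)) t)
    (hdiff : Differentiable ℝ (ev T))
    (hcomm : ∀ (t : ℝ) (z : Fin N → ℝ) (φv : Fin ℓ → ℝ),
      ev T (ev t (z, φv), φv + t • αhat) = ev t (ev T (z, φv), φv + T • αhat))
    (K : (Fin m → ℝ) × (Fin ℓ → ℝ) → (Fin N → ℝ)) (hK : ContDiff ℝ 1 K)
    (hinv : ∀ (θ : Fin m → ℝ) (φv : Fin ℓ → ℝ),
      ev T (K (θ, φv), φv) = K (θ + ω, φv + T • αhat)) :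
    ∀ (θ : Fin m → ℝ) (φv : Fin ℓ → ℝ),
      fderiv ℝ (fun z => ev T (z, φv)) (K (θ, φv))
          (XH (K (θ, φv)) φv - fderiv ℝ (fun φ' => K (θ, φ')) φv αhat)
        = XH (K (θ + ω, φv + T • αhat)) (φv + T • αhat)
          - fderiv ℝ (fun φ' => K (θ + ω, φ')) (φv + T • αhat) αhat :=
  adapted_vector_field_invariance_general N m ℓ T αhat ω XH ev h0 hode hdiff hcomm K hK hinv
end

section
/- Let F: U×𝕋^ℓ → U be fiberwise symplectic with respect to Ω, let K parameterize an F-invariant torus (F(K(θ,φ),φ) = K(θ+ω,φ+α) with ergodic rotation), and let W, V: 𝕋^{d-1}×𝕋^ℓ → ℝ^{2n} satisfy D_zF(K(θ,φ),φ)W(θ,φ) = λ·W(θ+ω,φ+α) and D_zF(K(θ,φ),φ)V(θ,φ) = μ·V(θ+ω,φ+α), with |λμ| < 1 (in particular if 0 < |λ| < 1 and |μ| ≤ 1), and suppose W, V are continuous. Then Vᵀ Ω(K) W ≡ 0 on 𝕋^{d-1}×𝕋^ℓ. -/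
/-!
The pairing `G = Vᵀ Ω(K) W` is a continuous function on the torus. Fiberwise symplecticity of `F`
together with the invariance equations gives `G x = λμ · G (x + (ω, α))`; iterating, `G x` is
`(λμ)^k` times a value of `G`, which is bounded by compactness of the torus, so `G x = 0`.
-/

open Matrix Set Filter Topology

section Decay

variable {X 𝕜 E : Type*} [NormedField 𝕜] [NormedAddCommGroup E] [NormedSpace 𝕜 E]

theorem eq_pow_smul_iterate {g : X → E} {T : X → X} {c : 𝕜} (hg : ∀ x, g x = c • g (T x))
    (k : ℕ) (x : X) : g x = c ^ k • g (T^[k] x) := by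
  induction k generalizing x with
  | zero => simp
  | succ k ih => rw [ih, hg (T^[k] x), smul_smul, pow_succ, ← Function.iterate_succ_apply' T]

theorem eq_zero_of_eq_smul_comp_of_norm_le {g : X → E} {T : X → X} {c : 𝕜} {M : ℝ}
    (hc : ‖c‖ < 1) (hM : ∀ x, ‖g x‖ ≤ M) (hg : ∀ x, g x = c • g (T x)) (x : X) : g x = 0 := by
  have hbound : ∀ k : ℕ, ‖g x‖ ≤ ‖c‖ ^ k * M := fun k => by
    rw [eq_pow_smul_iterate hg k x, norm_smul, norm_pow]
    exact mul_le_mul_of_nonneg_left (hM _) (by positivity)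
  have hlim : Tendsto (fun k : ℕ => ‖c‖ ^ k * M) atTop (𝓝 0) := by
    simpa using (tendsto_pow_atTop_nhds_zero_of_lt_one (norm_nonneg c) hc).mul_const M
  exact norm_le_zero_iff.mp (ge_of_tendsto' hlim hbound)

end Decay

/-- Functions on `𝕋^ι × 𝕋^κ` are modelled as `ℤ`-periodic functions on `ℝ^ι × ℝ^κ`. -/
def TorusPeriodic {ι κ α : Type*} (f : (ι → ℝ) × (κ → ℝ) → α) : Prop :=
  ∀ x (p : ι → ℤ) (q : κ → ℤ), f (x.1 + fun i => (p i : ℝ), x.2 + fun i => (q i : ℝ)) = f x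

theorem TorusPeriodic.isBounded_range {ι κ α : Type*} [PseudoMetricSpace α]
    {f : (ι → ℝ) × (κ → ℝ) → α} (hf : TorusPeriodic f) (hc : Continuous f) :
    Bornology.IsBounded (range f) := by
  refine (((isCompact_Icc (a := (0 : ι → ℝ)) (b := 1)).prod
    (isCompact_Icc (a := (0 : κ → ℝ)) (b := 1))).image hc).isBounded.subset ?_
  rintro _ ⟨x, rfl⟩
  refine ⟨(fun i => Int.fract (x.1 i), fun i => Int.fract (x.2 i)), ?_, ?_⟩
  · exact ⟨⟨fun i => Int.fract_nonneg _, fun i => (Int.fract_lt_one _).le⟩,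
      ⟨fun i => Int.fract_nonneg _, fun i => (Int.fract_lt_one _).le⟩⟩
  · have hx : x = ((fun i => Int.fract (x.1 i)) + fun i => (⌊x.1 i⌋ : ℝ),
        (fun i => Int.fract (x.2 i)) + fun i => (⌊x.2 i⌋ : ℝ)) := by
      ext i <;> simp [Int.fract_add_floor]
    conv_rhs => rw [hx]
    exact (hf _ _ _).symm

theorem pairing_eq_mul_pairing_comp {n X Φ : Type*} [Fintype n] [DecidableEq n]
    (Ω : (n → ℝ) → Matrix n n ℝ) (F : (n → ℝ) × Φ → n → ℝ)
    (hsymp : ∀ z φ u v, toBilin' (Ω (F (z, φ))) (fderiv ℝ (fun z' => F (z', φ)) z u)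
      (fderiv ℝ (fun z' => F (z', φ)) z v) = toBilin' (Ω z) u v)
    (T : X → X) (π : X → Φ) (K W V : X → n → ℝ) (lam mu : ℝ)
    (hinv : ∀ x, F (K x, π x) = K (T x))
    (hWinv : ∀ x, fderiv ℝ (fun z => F (z, π x)) (K x) (W x) = lam • W (T x))
    (hVinv : ∀ x, fderiv ℝ (fun z => F (z, π x)) (K x) (V x) = mu • V (T x)) (x : X) :
    toBilin' (Ω (K x)) (V x) (W x) = (lam * mu) • toBilin' (Ω (K (T x))) (V (T x)) (W (T x)) := by
  rw [← hsymp, hinv, hVinv, hWinv, LinearMap.map_smul₂, map_smul, smul_smul, mul_comm]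

theorem symplectic_orthogonality_of_bundles_general
    (N m ℓ : ℕ)
    (Ω : (Fin N → ℝ) → Matrix (Fin N) (Fin N) ℝ) (hΩ : Continuous Ω)
    (F : (Fin N → ℝ) × (Fin ℓ → ℝ) → (Fin N → ℝ))
    (hsymp : ∀ (z : Fin N → ℝ) (φv : Fin ℓ → ℝ) (u v : Fin N → ℝ),
      (∑ p, ∑ q, (fderiv ℝ (fun z' => F (z', φv)) z u) p *
        Ω (F (z, φv)) p q * (fderiv ℝ (fun z' => F (z', φv)) z v) q)
        = ∑ p, ∑ q, u p * Ω z p q * v q)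
    (ω : Fin m → ℝ) (α : Fin ℓ → ℝ)
    (K : (Fin m → ℝ) × (Fin ℓ → ℝ) → (Fin N → ℝ)) (hK : Continuous K)
    (hKper : ∀ (x : (Fin m → ℝ) × (Fin ℓ → ℝ)) (p : Fin m → ℤ) (q : Fin ℓ → ℤ),
      K (x.1 + fun i => ((p i : ℝ)), x.2 + fun i => ((q i : ℝ))) = K x)
    (hinv : ∀ x : (Fin m → ℝ) × (Fin ℓ → ℝ),
      F (K x, x.2) = K (x.1 + ω, x.2 + α))
    (lam mu : ℝ) (hcontr : |lam * mu| < 1)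
    (W V : (Fin m → ℝ) × (Fin ℓ → ℝ) → (Fin N → ℝ))
    (hW : Continuous W) (hV : Continuous V)
    (hWper : ∀ (x : (Fin m → ℝ) × (Fin ℓ → ℝ)) (p : Fin m → ℤ) (q : Fin ℓ → ℤ),
      W (x.1 + fun i => ((p i : ℝ)), x.2 + fun i => ((q i : ℝ))) = W x)
    (hVper : ∀ (x : (Fin m → ℝ) × (Fin ℓ → ℝ)) (p : Fin m → ℤ) (q : Fin ℓ → ℤ),
      V (x.1 + fun i => ((p i : ℝ)), x.2 + fun i => ((q i : ℝ))) = V x)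
    (hWinv : ∀ x : (Fin m → ℝ) × (Fin ℓ → ℝ),
      fderiv ℝ (fun z => F (z, x.2)) (K x) (W x) = lam • W (x.1 + ω, x.2 + α))
    (hVinv : ∀ x : (Fin m → ℝ) × (Fin ℓ → ℝ),
      fderiv ℝ (fun z => F (z, x.2)) (K x) (V x) = mu • V (x.1 + ω, x.2 + α)) :
    ∀ x : (Fin m → ℝ) × (Fin ℓ → ℝ),
      (∑ p, ∑ q, V x p * Ω (K x) p q * W x q) = 0 := by
  simp only [← Matrix.toBilin'_apply] at hsymp ⊢
  set G := fun x : (Fin m → ℝ) × (Fin ℓ → ℝ) => toBilin' (Ω (K x)) (V x) (W x)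
  have hstep : ∀ x, G x = (lam * mu) • G (x.1 + ω, x.2 + α) :=
    pairing_eq_mul_pairing_comp Ω F hsymp _ Prod.snd K W V lam mu hinv hWinv hVinv
  have hper : TorusPeriodic G := fun x p q => by simp only [G, hKper, hWper, hVper]
  have hcont : Continuous G := by simp only [G, Matrix.toBilin'_apply]; fun_prop
  obtain ⟨M, hM⟩ := (hper.isBounded_range hcont).exists_norm_le
  exact eq_zero_of_eq_smul_comp_of_norm_le (by rwa [Real.norm_eq_abs])
    (fun x => hM _ (mem_range_self x)) hstep

/-- symplectic orthogonality of invariant rank-1 directions.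
If `F` is fiberwise symplectic for `Ω`, `K` parameterizes an `F`-invariant torus
over an ergodic rotation `(ω,α)`, and `W`, `V` are continuous invariant directions
with multipliers `λ`, `μ` satisfying `|λμ| < 1`, then `VᵀΩ(K)W ≡ 0`. -/
theorem symplectic_orthogonality_of_bundles
    (N m ℓ : ℕ)
    (Ω : (Fin N → ℝ) → Matrix (Fin N) (Fin N) ℝ) (hΩ : Continuous Ω)
    (F : (Fin N → ℝ) × (Fin ℓ → ℝ) → (Fin N → ℝ)) (hF : ContDiff ℝ 1 F)
    (hsymp : ∀ (z : Fin N → ℝ) (φv : Fin ℓ → ℝ) (u v : Fin N → ℝ),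
      (∑ p, ∑ q, (fderiv ℝ (fun z' => F (z', φv)) z u) p *
        Ω (F (z, φv)) p q * (fderiv ℝ (fun z' => F (z', φv)) z v) q)
        = ∑ p, ∑ q, u p * Ω z p q * v q)
    (ω : Fin m → ℝ) (α : Fin ℓ → ℝ)
    (hirr : ∀ (k : Fin m → ℤ) (j : Fin ℓ → ℤ), ¬(k = 0 ∧ j = 0) →
      ∀ n : ℤ, (∑ i, (k i : ℝ) * ω i) + (∑ i, (j i : ℝ) * α i) ≠ (n : ℝ))
    (K : (Fin m → ℝ) × (Fin ℓ → ℝ) → (Fin N → ℝ)) (hK : Continuous K)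
    (hKper : ∀ (x : (Fin m → ℝ) × (Fin ℓ → ℝ)) (p : Fin m → ℤ) (q : Fin ℓ → ℤ),
      K (x.1 + fun i => ((p i : ℝ)), x.2 + fun i => ((q i : ℝ))) = K x)
    (hinv : ∀ x : (Fin m → ℝ) × (Fin ℓ → ℝ),
      F (K x, x.2) = K (x.1 + ω, x.2 + α))
    (lam mu : ℝ) (hcontr : |lam * mu| < 1)
    (W V : (Fin m → ℝ) × (Fin ℓ → ℝ) → (Fin N → ℝ))
    (hW : Continuous W) (hV : Continuous V)
    (hWper : ∀ (x : (Fin m → ℝ) × (Fin ℓ → ℝ)) (p : Fin m → ℤ) (q : Fin ℓ → ℤ),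
      W (x.1 + fun i => ((p i : ℝ)), x.2 + fun i => ((q i : ℝ))) = W x)
    (hVper : ∀ (x : (Fin m → ℝ) × (Fin ℓ → ℝ)) (p : Fin m → ℤ) (q : Fin ℓ → ℤ),
      V (x.1 + fun i => ((p i : ℝ)), x.2 + fun i => ((q i : ℝ))) = V x)
    (hWinv : ∀ x : (Fin m → ℝ) × (Fin ℓ → ℝ),
      fderiv ℝ (fun z => F (z, x.2)) (K x) (W x) = lam • W (x.1 + ω, x.2 + α))
    (hVinv : ∀ x : (Fin m → ℝ) × (Fin ℓ → ℝ),
      fderiv ℝ (fun z => F (z, x.2)) (K x) (V x) = mu • V (x.1 + ω, x.2 + α)) :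
    ∀ x : (Fin m → ℝ) × (Fin ℓ → ℝ),
      (∑ p, ∑ q, V x p * Ω (K x) p q * W x q) = 0 :=
  symplectic_orthogonality_of_bundles_general N m ℓ Ω hΩ F hsymp ω α K hK hKper hinv lam mu hcontr W
    V hW hV hWper hVper hWinv hVinv
end

section
/- Let K: 𝕋^{d-1}×𝕋^ℓ → U be C¹ and H: U×𝕋^ℓ → ℝ be C¹, and let Ω(z) = Da(z)ᵀ − Da(z) with X_H defined by Ω(z)X_H(z,φ) = D_zH(z,φ)ᵀ. Then the average over 𝕋^{d-1}×𝕋^ℓ of D_θK(θ,φ)ᵀ Ω(K(θ,φ)) ( X_H(K(θ,φ),φ) − D_φK(θ,φ)·α̂ ) is zero. -/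
/-!
Using `Ω = Daᵀ − Da` and `Ω X_H = D_zHᵀ`, the integrand at `x = (θ, φ)` equals
`∂_θᵢ (H (K x) φ) − ∑_q (∂_θᵢ (a_q ∘ K) ∂_α̂ K_q − ∂_α̂ (a_q ∘ K) ∂_θᵢ K_q)`.
Both terms average to zero over the torus. The first is a derivative of a periodic function.
For the second, `∫ (Df·v)(Dg·w)` is symmetric in `v` and `w`: as `f` and `g` are only `C¹`,
this is seen by differentiating at `t = 0` the identity
`∫ g (x + t • v) Df(x)w = −∫ f (x − t • v) Dg(x)w`, which follows from one integration by parts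
and the translation invariance of averages of periodic functions.
-/

/-- Matrix of the exact 2-form `Ω(z) = Da(z)ᵀ − Da(z)`. -/
noncomputable def exactOmega {N : ℕ} (a : (Fin N → ℝ) → (Fin N → ℝ))
    (z : Fin N → ℝ) (p q : Fin N) : ℝ :=
  fderiv ℝ a z (Pi.single p 1) q - fderiv ℝ a z (Pi.single q 1) p

open MeasureTheory Set Pointwise

def LatticePeriodic {G α : Type*} [AddGroup G] (L : AddSubgroup G) (f : G → α) : Prop :=
  ∀ l ∈ L, ∀ x, f (x + l) = f x

namespace LatticePeriodic

variable {G α β : Type*} [AddCommGroup G] {L : AddSubgroup G} {f g : G → α}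

theorem comp (hf : LatticePeriodic L f) (φ : α → β) : LatticePeriodic L (φ ∘ f) :=
  fun l hl x => congrArg φ (hf l hl x)

theorem comp_add_right (hf : LatticePeriodic L f) (v : G) :
    LatticePeriodic L (fun x => f (x + v)) := fun l hl x => by
  simp only [add_right_comm x l v, hf l hl]

theorem mul [Mul α] (hf : LatticePeriodic L f) (hg : LatticePeriodic L g) :
    LatticePeriodic L (f * g) := fun l hl x => by
  simp only [Pi.mul_apply, hf l hl, hg l hl]

theorem fderiv {E F : Type*} [NormedAddCommGroup E] [NormedSpace ℝ E]
    [NormedAddCommGroup F] [NormedSpace ℝ F] {L : AddSubgroup E} {f : E → F}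
    (hf : LatticePeriodic L f) : LatticePeriodic L (fderiv ℝ f) := fun l hl x => by
  rw [← fderiv_comp_add_right, funext (hf l hl)]

end LatticePeriodic

section

variable {E F : Type*} [NormedAddCommGroup E] [MeasurableSpace E] [BorelSpace E]
  [NormedAddCommGroup F] {μ : Measure E} {s : Set E}

theorem Continuous.integrableOn_of_isBounded [ProperSpace E] [IsFiniteMeasureOnCompacts μ]
    {f : E → F} (hf : Continuous f) (hs : Bornology.IsBounded s) : IntegrableOn f s μ :=
  (hf.locallyIntegrable.integrableOn_isCompact hs.isCompact_closure).mono_set subset_closure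

theorem MeasureTheory.IsAddFundamentalDomain.setIntegral_comp_add_right [NormedSpace ℝ F]
    [μ.IsAddLeftInvariant] {L : AddSubgroup E} [Countable L] (hs : IsAddFundamentalDomain L s μ)
    {f : E → F} (hf : LatticePeriodic L f) (v : E) :
    ∫ x in s, f (x + v) ∂μ = ∫ x in s, f x ∂μ := calc
  ∫ x in s, f (x + v) ∂μ = ∫ x in v +ᵥ s, f x ∂μ := by
    simp_rw [add_comm _ v]
    exact ((measurePreserving_add_left μ v).setIntegral_image_emb
      (measurableEmbedding_addLeft v) f s).symm
  _ = ∫ x in s, f x ∂μ := (hs.vadd_of_comm v).setIntegral_eq hs fun l x => by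
    rw [AddSubgroup.vadd_def, vadd_eq_add, add_comm]
    exact hf l l.2 x

variable [NormedSpace ℝ E] [ProperSpace E] [IsFiniteMeasureOnCompacts μ]

theorem hasDerivAt_setIntegral_comp_add_smul_mul (hs : Bornology.IsBounded s) {φ ψ : E → ℝ}
    (hφ : ContDiff ℝ 1 φ) (hψ : Continuous ψ) (v : E) :
    HasDerivAt (fun t : ℝ => ∫ x in s, φ (x + t • v) * ψ x ∂μ)
      (∫ x in s, fderiv ℝ φ x v * ψ x ∂μ) 0 := by
  have hφ' : Continuous (fun p : E × ℝ => fderiv ℝ φ (p.1 + p.2 • v) v * ψ p.1) := by fun_prop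
  obtain ⟨C, hC⟩ := (hs.isCompact_closure.prod (isCompact_closedBall (0 : ℝ) 1))
    |>.exists_bound_of_continuousOn hφ'.continuousOn
  have h := hasDerivAt_integral_of_dominated_loc_of_deriv_le (μ := μ.restrict s) (x₀ := (0 : ℝ))
    (F := fun t x => φ (x + t • v) * ψ x)
    (F' := fun t x => fderiv ℝ φ (x + t • v) v * ψ x) (bound := fun _ => C)
    (Metric.ball_mem_nhds 0 one_pos) ?_ ?_ ?_ ?_ ?_ ?_
  · simpa using h.2
  · exact .of_forall fun t => by fun_prop
  · exact (by fun_prop : Continuous _).integrableOn_of_isBounded hs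
  · exact (by fun_prop : Continuous _).aestronglyMeasurable
  · filter_upwards [ae_restrict_of_ae_restrict_of_subset subset_closure
      (ae_restrict_mem isClosed_closure.measurableSet)] with x hx t ht
    exact hC (x, t) ⟨hx, Metric.ball_subset_closedBall ht⟩
  · exact integrableOn_const ((measure_mono subset_closure).trans_lt
      hs.isCompact_closure.measure_lt_top).ne
  · refine .of_forall fun x t _ => ?_
    have hline : HasDerivAt (fun t : ℝ => x + t • v) v t := by
      simpa using ((hasDerivAt_id t).smul_const v).const_add x
    simpa using ((hφ.differentiable one_ne_zero _).hasFDerivAt.comp_hasDerivAt t hline).mul_const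
      (ψ x)

namespace MeasureTheory.IsAddFundamentalDomain

variable [μ.IsAddLeftInvariant] {L : AddSubgroup E} [Countable L]
  (hs : IsAddFundamentalDomain L s μ) (hsb : Bornology.IsBounded s)
  {f g : E → ℝ} (hf : ContDiff ℝ 1 f) (hg : ContDiff ℝ 1 g)
  (hfper : LatticePeriodic L f) (hgper : LatticePeriodic L g)
include hs hsb hf hfper

theorem setIntegral_fderiv_apply_eq_zero (v : E) : ∫ x in s, fderiv ℝ f x v ∂μ = 0 := by
  have h := hasDerivAt_setIntegral_comp_add_smul_mul (μ := μ) hsb hf continuous_const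
    (ψ := fun _ => 1) v
  simp only [mul_one, hs.setIntegral_comp_add_right hfper] at h
  exact h.unique (hasDerivAt_const _ _)

include hg hgper

theorem setIntegral_fderiv_apply_mul_eq_neg (v : E) :
    ∫ x in s, fderiv ℝ f x v * g x ∂μ = -∫ x in s, f x * fderiv ℝ g x v ∂μ := by
  have h : ∫ x in s, fderiv ℝ (fun y => f y * g y) x v ∂μ = 0 :=
    hs.setIntegral_fderiv_apply_eq_zero hsb (hf.mul hg) (hfper.mul hgper) v
  simp only [fderiv_fun_mul (hf.differentiable one_ne_zero _) (hg.differentiable one_ne_zero _),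
    add_apply, smul_apply, smul_eq_mul] at h
  rw [integral_add ((by fun_prop : Continuous _).integrableOn_of_isBounded hsb)
    ((by fun_prop : Continuous _).integrableOn_of_isBounded hsb)] at h
  simp_rw [mul_comm (fderiv ℝ f _ v)]
  linarith

theorem setIntegral_fderiv_mul_fderiv_sub_eq_zero (v w : E) :
    ∫ x in s, (fderiv ℝ f x v * fderiv ℝ g x w - fderiv ℝ f x w * fderiv ℝ g x v) ∂μ = 0 := by
  have key (t : ℝ) : ∫ x in s, g (x + t • v) * fderiv ℝ f x w ∂μ =
      -∫ x in s, f (x + t • -v) * fderiv ℝ g x w ∂μ := calc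
    _ = ∫ x in s, fderiv ℝ f x w * g (x + t • v) ∂μ := by simp_rw [mul_comm]
    _ = -∫ x in s, f x * fderiv ℝ g (x + t • v) w ∂μ := by
      rw [hs.setIntegral_fderiv_apply_mul_eq_neg hsb hf (g := fun x => g (x + t • v))
        (hg.comp (by fun_prop)) hfper (hgper.comp_add_right _)]
      simp_rw [fderiv_comp_add_right]
    _ = -∫ x in s, f (x + t • -v) * fderiv ℝ g x w ∂μ := by
      rw [← hs.setIntegral_comp_add_right (f := fun x => f (x + t • -v) * fderiv ℝ g x w)
        ((hfper.comp_add_right _).mul (hgper.fderiv.comp (· w))) (t • v)]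
      simp [smul_neg]
  have h₁ := hasDerivAt_setIntegral_comp_add_smul_mul (μ := μ) hsb hg
    (by fun_prop : Continuous fun x => fderiv ℝ f x w) v
  have h₂ : HasDerivAt (fun t : ℝ => ∫ x in s, g (x + t • v) * fderiv ℝ f x w ∂μ)
      (-∫ x in s, fderiv ℝ f x (-v) * fderiv ℝ g x w ∂μ) 0 := by
    simpa only [key] using (hasDerivAt_setIntegral_comp_add_smul_mul hsb hf
      (by fun_prop : Continuous fun x => fderiv ℝ g x w) (-v)).fun_neg
  have h := h₁.unique h₂
  simp only [map_neg, neg_mul, integral_neg, neg_neg] at h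
  rw [integral_sub ((by fun_prop : Continuous _).integrableOn_of_isBounded hsb)
    ((by fun_prop : Continuous _).integrableOn_of_isBounded hsb), ← h, sub_eq_zero]
  simp_rw [mul_comm]

end MeasureTheory.IsAddFundamentalDomain

end

section Torus

open Submodule

variable {ι κ : Type*} [Fintype ι] [Fintype κ]

instance : (volume : Measure ((ι → ℝ) × (κ → ℝ))).IsAddLeftInvariant :=
  inferInstanceAs (volume.prod volume).IsAddLeftInvariant

noncomputable def prodBasisFun (ι κ : Type*) [Finite ι] [Finite κ] :
    Module.Basis (ι ⊕ κ) ℝ ((ι → ℝ) × (κ → ℝ)) :=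
  (Pi.basisFun ℝ ι).prod (Pi.basisFun ℝ κ)

instance : Countable (span ℤ (range (prodBasisFun ι κ))).toAddSubgroup :=
  inferInstanceAs (Countable (span ℤ (range (prodBasisFun ι κ))))

theorem latticePeriodic_span_prodBasisFun {α : Type*} {f : (ι → ℝ) × (κ → ℝ) → α}
    (hf : ∀ (x : (ι → ℝ) × (κ → ℝ)) (p : ι → ℤ) (q : κ → ℤ),
      f (x.1 + fun i => (p i : ℝ), x.2 + fun i => (q i : ℝ)) = f x) :
    LatticePeriodic (span ℤ (range (prodBasisFun ι κ))).toAddSubgroup f := by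
  intro l hl x
  rw [mem_toAddSubgroup, Module.Basis.mem_span_iff_repr_mem] at hl
  choose c hc using hl
  obtain rfl : l = (fun i => (c (.inl i) : ℝ), fun i => (c (.inr i) : ℝ)) := by
    ext i
    · simpa [prodBasisFun] using (hc (.inl i)).symm
    · simpa [prodBasisFun] using (hc (.inr i)).symm
  exact hf x _ _

theorem Icc_ae_eq_fundamentalDomain_prodBasisFun :
    Icc (0 : (ι → ℝ) × (κ → ℝ)) 1 =ᵐ[volume] ZSpan.fundamentalDomain (prodBasisFun ι κ) := by
  have : ZSpan.fundamentalDomain (prodBasisFun ι κ) =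
      (univ.pi fun _ => Ico (0 : ℝ) 1) ×ˢ (univ.pi fun _ => Ico (0 : ℝ) 1) := by
    ext x; simp [ZSpan.mem_fundamentalDomain, prodBasisFun]
  rw [this, ← Icc_prod_Icc]
  exact (Measure.set_prod_ae_eq Measure.univ_pi_Ico_ae_eq_Icc Measure.univ_pi_Ico_ae_eq_Icc).symm

end Torus

theorem ContinuousLinearMap.apply_eq_sum_smul_apply_single {ι R M : Type*} [Fintype ι]
    [DecidableEq ι] [Semiring R] [TopologicalSpace R] [AddCommMonoid M] [TopologicalSpace M]
    [Module R M] (f : (ι → R) →L[R] M) (u : ι → R) :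
    f u = ∑ i, u i • f (Pi.single i 1) := by
  conv_lhs => rw [pi_eq_sum_univ' u]
  simp [map_sum]

theorem sum_sum_mul_exactOmega_mul {N : ℕ} (a : (Fin N → ℝ) → (Fin N → ℝ))
    (z u u' : Fin N → ℝ) :
    ∑ p, ∑ q, u p * exactOmega a z p q * u' q =
      ∑ q, (fderiv ℝ a z u q * u' q - fderiv ℝ a z u' q * u q) := by
  have hexp (y : Fin N → ℝ) (q : Fin N) :
      fderiv ℝ a z y q = ∑ p, y p * fderiv ℝ a z (Pi.single p 1) q := by
    simpa using congrFun ((fderiv ℝ a z).apply_eq_sum_smul_apply_single y) q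
  simp only [exactOmega, hexp u, hexp u', mul_sub, sub_mul, Finset.sum_sub_distrib,
    Finset.sum_mul]
  rw [Finset.sum_comm]
  congr 1
  exact Finset.sum_congr rfl fun _ _ => Finset.sum_congr rfl fun _ _ => by ring

section

variable {E₁ E₂ F : Type*} [NormedAddCommGroup E₁] [NormedSpace ℝ E₁] [NormedAddCommGroup E₂]
  [NormedSpace ℝ E₂] [NormedAddCommGroup F] [NormedSpace ℝ F] {G : E₁ × E₂ → F} {x : E₁ × E₂}

theorem fderiv_comp_prodMk_left_apply_s14 (hG : DifferentiableAt ℝ G x) (u : E₁) :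
    fderiv ℝ (fun θ => G (θ, x.2)) x.1 u = fderiv ℝ G x (u, 0) := by
  have h : HasFDerivAt (fun θ => G (θ, x.2)) ((fderiv ℝ G x).comp (.inl ℝ E₁ E₂)) x.1 :=
    hG.hasFDerivAt.comp x.1 (hasFDerivAt_prodMk_left x.1 x.2)
  rw [h.fderiv]
  rfl

theorem fderiv_comp_prodMk_right_apply (hG : DifferentiableAt ℝ G x) (u : E₂) :
    fderiv ℝ (fun φ => G (x.1, φ)) x.2 u = fderiv ℝ G x (0, u) := by
  have h : HasFDerivAt (fun φ => G (x.1, φ)) ((fderiv ℝ G x).comp (.inr ℝ E₁ E₂)) x.2 :=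
    hG.hasFDerivAt.comp x.2 (hasFDerivAt_prodMk_right x.1 x.2)
  rw [h.fderiv]
  rfl

theorem pairing_eq_fderiv_comp_sub_sum_jacobian {N : ℕ} {a : (Fin N → ℝ) → (Fin N → ℝ)}
    {H : (Fin N → ℝ) → E₂ → ℝ} {XH : (Fin N → ℝ) → E₂ → (Fin N → ℝ)} {K : E₁ × E₂ → (Fin N → ℝ)}
    (ha : DifferentiableAt ℝ a (K x))
    (hH : DifferentiableAt ℝ (fun q : (Fin N → ℝ) × E₂ => H q.1 q.2) (K x, x.2))
    (hK : DifferentiableAt ℝ K x)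
    (hXH : ∀ p, ∑ q, exactOmega a (K x) p q * XH (K x) x.2 q
      = fderiv ℝ (fun z' => H z' x.2) (K x) (Pi.single p 1)) (u₁ : E₁) (u₂ : E₂) :
    ∑ p, ∑ q, fderiv ℝ (fun θ' => K (θ', x.2)) x.1 u₁ p * exactOmega a (K x) p q *
        (XH (K x) x.2 q - fderiv ℝ (fun φ' => K (x.1, φ')) x.2 u₂ q) =
      fderiv ℝ (fun y => H (K y) y.2) x (u₁, 0) -
        ∑ q, (fderiv ℝ (fun y => a (K y) q) x (u₁, 0) * fderiv ℝ (fun y => K y q) x (0, u₂) -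
          fderiv ℝ (fun y => a (K y) q) x (0, u₂) * fderiv ℝ (fun y => K y q) x (u₁, 0)) := by
  have hHK : fderiv ℝ (fun y => H (K y) y.2) x (u₁, 0) =
      fderiv ℝ (fun z => H z x.2) (K x) (fderiv ℝ K x (u₁, 0)) := by
    have h : HasFDerivAt (fun y => H (K y) y.2)
        ((fderiv ℝ (fun q : (Fin N → ℝ) × E₂ => H q.1 q.2) (K x, x.2)).comp
          ((fderiv ℝ K x).prod (.snd ℝ E₁ E₂))) x :=
      HasFDerivAt.comp (g := fun q : (Fin N → ℝ) × E₂ => H q.1 q.2) x hH.hasFDerivAt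
        (hK.hasFDerivAt.prodMk hasFDerivAt_snd)
    rw [fderiv_comp_prodMk_left_apply_s14 (x := (K x, x.2)) hH, h.fderiv]
    rfl
  have haK (q : Fin N) (d : E₁ × E₂) :
      fderiv ℝ (fun y => a (K y) q) x d = fderiv ℝ a (K x) (fderiv ℝ K x d) q := by
    rw [fderiv_apply (Φ := fun y => a (K y)) (ha.comp x hK), fderiv_fun_comp x ha hK]
    rfl
  have hKq (q : Fin N) (d : E₁ × E₂) : fderiv ℝ (fun y => K y q) x d = fderiv ℝ K x d q := by
    rw [fderiv_apply hK]
    rfl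
  simp only [fderiv_comp_prodMk_left_apply_s14 hK, fderiv_comp_prodMk_right_apply hK, hHK, haK, hKq,
    ← sum_sum_mul_exactOmega_mul]
  rw [(fderiv ℝ (fun z => H z x.2) (K x)).apply_eq_sum_smul_apply_single]
  simp only [← hXH, smul_eq_mul, Finset.mul_sum, mul_sub, Finset.sum_sub_distrib, mul_assoc]

end

/-- the average over the torus of
`D_θKᵀ Ω(K) ( X_H(K,·) − D_φK·α̂ )` vanishes, where `Ω = Daᵀ − Da` and
`X_H` is the Hamiltonian vector field, `Ω(z)X_H(z,φ) = D_zH(z,φ)ᵀ`. -/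
theorem average_of_adapted_field_pairing_vanishes
    (N m ℓ : ℕ) (αhat : Fin ℓ → ℝ)
    (a : (Fin N → ℝ) → (Fin N → ℝ)) (ha : ContDiff ℝ 1 a)
    (H : (Fin N → ℝ) → (Fin ℓ → ℝ) → ℝ)
    (hH : ContDiff ℝ 1 (fun q : (Fin N → ℝ) × (Fin ℓ → ℝ) => H q.1 q.2))
    (hHper : ∀ (z : Fin N → ℝ) (φv : Fin ℓ → ℝ) (q : Fin ℓ → ℤ),
      H z (φv + fun i => ((q i : ℝ))) = H z φv)
    (XH : (Fin N → ℝ) → (Fin ℓ → ℝ) → (Fin N → ℝ))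
    (hXH : ∀ (z : Fin N → ℝ) (φv : Fin ℓ → ℝ) (p : Fin N),
      (∑ q, exactOmega a z p q * XH z φv q)
        = fderiv ℝ (fun z' => H z' φv) z (Pi.single p 1))
    (K : (Fin m → ℝ) × (Fin ℓ → ℝ) → (Fin N → ℝ)) (hK : ContDiff ℝ 1 K)
    (hKper : ∀ (x : (Fin m → ℝ) × (Fin ℓ → ℝ)) (p : Fin m → ℤ) (q : Fin ℓ → ℤ),
      K (x.1 + fun i => ((p i : ℝ)), x.2 + fun i => ((q i : ℝ))) = K x) :
    ∀ i : Fin m,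
      (∫ x in Set.Icc (0 : (Fin m → ℝ) × (Fin ℓ → ℝ)) 1,
        ∑ p, ∑ q, (fderiv ℝ (fun θ' => K (θ', x.2)) x.1 (Pi.single i 1)) p *
          exactOmega a (K x) p q *
          (XH (K x) x.2 q - (fderiv ℝ (fun φ' => K (x.1, φ')) x.2 αhat) q))
        = 0 := by
  intro i
  have hF := ZSpan.isAddFundamentalDomain' (prodBasisFun (Fin m) (Fin ℓ)) volume
  have hFb := ZSpan.fundamentalDomain_isBounded (prodBasisFun (Fin m) (Fin ℓ))
  have hHK : ContDiff ℝ 1 fun y => H (K y) y.2 := hH.comp (hK.prodMk contDiff_snd)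
  have haK (q : Fin N) : ContDiff ℝ 1 fun y => a (K y) q := contDiff_pi.1 (ha.comp hK) q
  have hKq (q : Fin N) : ContDiff ℝ 1 fun y => K y q := contDiff_pi.1 hK q
  have hKL := latticePeriodic_span_prodBasisFun hKper
  have hHKper : LatticePeriodic _ fun y => H (K y) y.2 :=
    latticePeriodic_span_prodBasisFun fun x p q => by simp only [hKper, hHper]
  rw [setIntegral_congr_set Icc_ae_eq_fundamentalDomain_prodBasisFun]
  simp_rw [pairing_eq_fderiv_comp_sub_sum_jacobian (ha.differentiable one_ne_zero _)
    (hH.differentiable one_ne_zero _) (hK.differentiable one_ne_zero _) (hXH _ _)]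
  rw [integral_sub ((by fun_prop : Continuous _).integrableOn_of_isBounded hFb)
    ((by fun_prop : Continuous _).integrableOn_of_isBounded hFb),
    integral_finsetSum _ fun q _ => (by fun_prop : Continuous _).integrableOn_of_isBounded hFb,
    hF.setIntegral_fderiv_apply_eq_zero hFb hHK hHKper]
  simp [hF.setIntegral_fderiv_mul_fderiv_sub_eq_zero hFb (haK _) (hKq _)
    (hKL.comp fun z => a z _) (hKL.comp (· _))]
end

section
/- With p_t as in the primitive function lemma, the φ-derivative satisfies D_φ p_t(z,φ) = a(φ_t(z,φ))ᵀ D_φφ_t(z,φ) − ∫₀ᵗ D_φH(φ_s(z,φ), φ+α̂s) ds. -/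
open ContinuousLinearMap in
lemma hasFDerivAt_partial_snd' {X Y M : Type*} [NormedAddCommGroup X] [NormedSpace ℝ X]
    [NormedAddCommGroup Y] [NormedSpace ℝ Y] [NormedAddCommGroup M] [NormedSpace ℝ M]
    {g : X × Y → M} {p : X × Y} (hg : DifferentiableAt ℝ g p) :
    HasFDerivAt (fun y' => g (p.1, y')) ((fderiv ℝ g p).comp (inr ℝ X Y)) p.2 := by
  have h1 : HasFDerivAt (fun y' : Y => ((p.1, y') : X × Y)) (inr ℝ X Y) p.2 :=
    (hasFDerivAt_const p.1 p.2).prodMk (hasFDerivAt_id p.2)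
  exact hg.hasFDerivAt.comp p.2 h1

open ContinuousLinearMap in
lemma hasFDerivAt_partial_fst' {X Y M : Type*} [NormedAddCommGroup X] [NormedSpace ℝ X]
    [NormedAddCommGroup Y] [NormedSpace ℝ Y] [NormedAddCommGroup M] [NormedSpace ℝ M]
    {g : X × Y → M} {p : X × Y} (hg : DifferentiableAt ℝ g p) :
    HasFDerivAt (fun x' => g (x', p.2)) ((fderiv ℝ g p).comp (inl ℝ X Y)) p.1 := by
  have h1 : HasFDerivAt (fun x' : X => ((x', p.2) : X × Y)) (inl ℝ X Y) p.1 :=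
    (hasFDerivAt_id p.1).prodMk (hasFDerivAt_const p.2 p.1)
  exact hg.hasFDerivAt.comp p.1 h1

lemma clm_apply_eq_sum' {N : ℕ} {M : Type*} [NormedAddCommGroup M] [NormedSpace ℝ M]
    (L : (Fin N → ℝ) →L[ℝ] M) (v : Fin N → ℝ) :
    L v = ∑ p, v p • L (Pi.single p 1) := by
  conv_lhs => rw [← Finset.univ_sum_single v]
  rw [map_sum]
  refine Finset.sum_congr rfl fun p _ => ?_
  rw [← map_smul]
  congr 1
  simp [← Pi.single_smul]



/-- The primitive function `p_t(z,φ) = ∫₀ᵗ (a(φ_s)ᵀX_H(φ_s, φ+α̂s) − H(φ_s, φ+α̂s)) ds`. -/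
noncomputable def primFn {N ℓ : ℕ} (αhat : Fin ℓ → ℝ)
    (a : (Fin N → ℝ) → (Fin N → ℝ))
    (XH : (Fin N → ℝ) → (Fin ℓ → ℝ) → (Fin N → ℝ))
    (H : (Fin N → ℝ) → (Fin ℓ → ℝ) → ℝ)
    (ev : ℝ → ((Fin N → ℝ) × (Fin ℓ → ℝ)) → (Fin N → ℝ))
    (t : ℝ) (z : Fin N → ℝ) (φv : Fin ℓ → ℝ) : ℝ :=
  ∫ s in (0:ℝ)..t,
    ((∑ q, a (ev s (z, φv)) q * XH (ev s (z, φv)) (φv + s • αhat) q)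
      - H (ev s (z, φv)) (φv + s • αhat))

set_option maxHeartbeats 1000000 in
open ContinuousLinearMap in
/-- the `φ`-derivative of the primitive function satisfies
`D_φ p_t(z,φ) = a(φ_t(z,φ))ᵀ D_φφ_t(z,φ) − ∫₀ᵗ D_φH(φ_s(z,φ), φ+α̂s) ds`. -/
theorem primitive_function_phi_derivative
    (N ℓ : ℕ) (αhat : Fin ℓ → ℝ)
    (a : (Fin N → ℝ) → (Fin N → ℝ)) (ha : ContDiff ℝ (⊤ : ℕ∞) a)
    (H : (Fin N → ℝ) → (Fin ℓ → ℝ) → ℝ)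
    (hH : ContDiff ℝ (⊤ : ℕ∞) (fun q : (Fin N → ℝ) × (Fin ℓ → ℝ) => H q.1 q.2))
    (XH : (Fin N → ℝ) → (Fin ℓ → ℝ) → (Fin N → ℝ))
    (hXHc : ContDiff ℝ (⊤ : ℕ∞) (fun q : (Fin N → ℝ) × (Fin ℓ → ℝ) => XH q.1 q.2))
    (hDH : ∀ (z : Fin N → ℝ) (φv : Fin ℓ → ℝ) (p : Fin N),
      fderiv ℝ (fun z' => H z' φv) z (Pi.single p 1)
        = -∑ q, XH z φv q * exactOmega a z q p)
    (ev : ℝ → ((Fin N → ℝ) × (Fin ℓ → ℝ)) → (Fin N → ℝ))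
    (hev : ContDiff ℝ (⊤ : ℕ∞) (fun q : ℝ × ((Fin N → ℝ) × (Fin ℓ → ℝ)) => ev q.1 q.2))
    (h0 : ∀ p : (Fin N → ℝ) × (Fin ℓ → ℝ), ev 0 p = p.1)
    (hode : ∀ (t : ℝ) (p : (Fin N → ℝ) × (Fin ℓ → ℝ)),
      HasDerivAt (fun s => ev s p) (XH (ev t p) (p.2 + t • αhat)) t) :
    ∀ (t : ℝ) (z : Fin N → ℝ) (φv : Fin ℓ → ℝ) (w : Fin ℓ → ℝ),
      fderiv ℝ (fun φ' => primFn αhat a XH H ev t z φ') φv w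
        = (∑ q, a (ev t (z, φv)) q * (fderiv ℝ (fun φ' => ev t (z, φ')) φv w) q)
          - ∫ s in (0:ℝ)..t,
              fderiv ℝ (fun ψ => H (ev s (z, φv)) ψ) (φv + s • αhat) w := by
  intro t z φv w
  -- The flow as a function of (time, angle)
  set Φ : ℝ × (Fin ℓ → ℝ) → (Fin N → ℝ) := fun q => ev q.1 (z, q.2) with hΦdef
  have hΦ : ContDiff ℝ (⊤ : ℕ∞) Φ :=
    hev.comp (contDiff_fst.prodMk (contDiff_const.prodMk contDiff_snd))
  have hΦd : Differentiable ℝ Φ := hΦ.differentiable (by simp)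
  set DΦ : ℝ × (Fin ℓ → ℝ) → (ℝ × (Fin ℓ → ℝ)) →L[ℝ] (Fin N → ℝ) := fderiv ℝ Φ with hDΦdef
  have hDΦ : ContDiff ℝ (⊤ : ℕ∞) DΦ := hΦ.fderiv_right (by simp)
  have hDΦd : Differentiable ℝ DΦ := hDΦ.differentiable (by simp)
  -- uncurried Hamiltonian and vector field
  set Hu : (Fin N → ℝ) × (Fin ℓ → ℝ) → ℝ := fun q => H q.1 q.2 with hHudef
  have hHud : Differentiable ℝ Hu := hH.differentiable (by simp)
  -- the integrand
  set f : ℝ × (Fin ℓ → ℝ) → ℝ := fun q =>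
    (∑ i, a (Φ q) i * XH (Φ q) (q.2 + q.1 • αhat) i) - H (Φ q) (q.2 + q.1 • αhat)
    with hfdef
  have hψc : ContDiff ℝ (⊤ : ℕ∞) (fun q : ℝ × (Fin ℓ → ℝ) => q.2 + q.1 • αhat) :=
    contDiff_snd.add (contDiff_fst.smul contDiff_const)
  have hf : ContDiff ℝ (⊤ : ℕ∞) f := by
    apply ContDiff.sub
    · apply ContDiff.sum
      intro i _
      exact ((contDiff_pi.1 (ha.comp hΦ)) i).mul
        ((contDiff_pi.1 (hXHc.comp (hΦ.prodMk hψc))) i)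
    · exact hH.comp (hΦ.prodMk hψc)
  have hfd : Differentiable ℝ f := hf.differentiable (by simp)
  -- key one-variable functions
  set u : ℝ → (Fin N → ℝ) := fun s => ev s (z, φv) with hudef
  set ψf : ℝ → (Fin ℓ → ℝ) := fun s => φv + s • αhat with hψfdef
  set v : ℝ → (Fin N → ℝ) := fun s => DΦ (s, φv) (0, w) with hvdef
  set g : ℝ → ℝ := fun s => fderiv ℝ f (s, φv) (0, w) with hgdef
  set h : ℝ → ℝ := fun s => fderiv ℝ (fun ψ => H (u s) ψ) (ψf s) w with hhdef
  set A : ℝ → ℝ := fun s => ∑ q, a (u s) q * v s q with hAdef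
  -- P1: partial derivative of the flow in the angle variable
  have P1 : ∀ (s : ℝ) (φ' : Fin ℓ → ℝ),
      HasFDerivAt (fun φ'' => ev s (z, φ''))
        ((DΦ (s, φ')).comp (inr ℝ ℝ (Fin ℓ → ℝ))) φ' := by
    intro s φ'
    exact hasFDerivAt_partial_snd' (hΦd (s, φ'))
  -- P2: the time derivative of the flow equals the vector field
  have P2 : ∀ (s : ℝ) (φ' : Fin ℓ → ℝ),
      DΦ (s, φ') (1, 0) = XH (ev s (z, φ')) (φ' + s • αhat) := by
    intro s φ'
    have h1 : HasDerivAt (fun s' => Φ (s', φ')) (DΦ (s, φ') ((1 : ℝ), (0 : Fin ℓ → ℝ))) s :=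
      by have := (hΦd (s, φ')).hasFDerivAt.comp_hasDerivAt s
           ((hasDerivAt_id s).prodMk (hasDerivAt_const s φ')); exact this
    exact h1.unique (hode s (z, φ'))
  -- P3: the mixed partial derivative (Clairaut)
  have P3 : ∀ s : ℝ, HasDerivAt v
      (fderiv ℝ (fun φ' => XH (ev s (z, φ')) (φ' + s • αhat)) φv w) s := by
    intro s
    have hc : HasDerivAt (fun s' => ((s', φv) : ℝ × (Fin ℓ → ℝ))) ((1 : ℝ), (0 : Fin ℓ → ℝ)) s :=
      (hasDerivAt_id s).prodMk (hasDerivAt_const s φv)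
    have hDcomp : HasDerivAt (fun s' => DΦ (s', φv)) (fderiv ℝ DΦ (s, φv) (1, 0)) s :=
      (hDΦd (s, φv)).hasFDerivAt.comp_hasDerivAt s hc
    have hv1 : HasDerivAt v (fderiv ℝ DΦ (s, φv) (1, 0) ((0 : ℝ), w)) s :=
      ((apply ℝ (Fin N → ℝ) (((0 : ℝ), w) : ℝ × (Fin ℓ → ℝ))).hasFDerivAt).comp_hasDerivAt s hDcomp
    have hsymm : fderiv ℝ DΦ (s, φv) (1, 0) ((0 : ℝ), w)
        = fderiv ℝ DΦ (s, φv) ((0 : ℝ), w) (1, 0) :=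
      second_derivative_symmetric (fun y => (hΦd y).hasFDerivAt)
        ((hDΦd (s, φv)).hasFDerivAt) _ _
    have hP : HasFDerivAt (fun φ' => DΦ (s, φ'))
        ((fderiv ℝ DΦ (s, φv)).comp (inr ℝ ℝ (Fin ℓ → ℝ))) φv :=
      hasFDerivAt_partial_snd' (hDΦd (s, φv))
    have hQ : HasFDerivAt (fun φ' => DΦ (s, φ') ((1 : ℝ), (0 : Fin ℓ → ℝ)))
        ((apply ℝ (Fin N → ℝ) (((1 : ℝ), (0 : Fin ℓ → ℝ)) : ℝ × (Fin ℓ → ℝ))).comp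
          ((fderiv ℝ DΦ (s, φv)).comp (inr ℝ ℝ (Fin ℓ → ℝ)))) φv :=
      (apply ℝ (Fin N → ℝ) (((1 : ℝ), (0 : Fin ℓ → ℝ)) : ℝ × (Fin ℓ → ℝ))).hasFDerivAt.comp φv hP
    have hfun : (fun φ' => DΦ (s, φ') ((1 : ℝ), (0 : Fin ℓ → ℝ)))
        = fun φ' => XH (ev s (z, φ')) (φ' + s • αhat) := funext fun φ' => P2 s φ'
    rw [hfun] at hQ
    have : fderiv ℝ (fun φ' => XH (ev s (z, φ')) (φ' + s • αhat)) φv w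
        = fderiv ℝ DΦ (s, φv) ((0 : ℝ), w) (1, 0) := by
      rw [hQ.fderiv]; rfl
    rw [this, ← hsymm]
    exact hv1
  -- P4: at time 0 the angle-derivative of the flow vanishes
  have P4 : v 0 = 0 := by
    have h1 : HasFDerivAt (fun φ' => ev (0 : ℝ) (z, φ'))
        ((DΦ (0, φv)).comp (inr ℝ ℝ (Fin ℓ → ℝ))) φv := P1 0 φv
    have h2 : (fun φ' : Fin ℓ → ℝ => ev (0 : ℝ) (z, φ')) = fun _ => z :=
      funext fun φ' => h0 (z, φ')
    rw [h2] at h1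
    have h3 : ((DΦ (0, φv)).comp (inr ℝ ℝ (Fin ℓ → ℝ))) = 0 :=
      h1.unique (hasFDerivAt_const z φv)
    have : v 0 = ((DΦ (0, φv)).comp (inr ℝ ℝ (Fin ℓ → ℝ))) w := rfl
    rw [this, h3]; rfl
  -- P5: identification of v t with the goal's derivative
  have P5 : fderiv ℝ (fun φ' => ev t (z, φ')) φv w = v t := by
    rw [(P1 t φv).fderiv]; rfl
  -- main computational step: A' = g + h
  have hA : ∀ s : ℝ, HasDerivAt A (g s + h s) s := by
    intro s
    set z₀ : Fin N → ℝ := u s with hz₀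
    set ψ₀ : Fin ℓ → ℝ := ψf s with hψ₀
    set X₀ : Fin N → ℝ := XH z₀ ψ₀ with hX₀
    set v₀ : Fin N → ℝ := v s with hv₀
    set Da : (Fin N → ℝ) →L[ℝ] (Fin N → ℝ) := fderiv ℝ a z₀ with hDa
    set W : Fin N → ℝ := fderiv ℝ (fun φ' => XH (ev s (z, φ')) (φ' + s • αhat)) φv w with hW
    -- Step 1: A has derivative D₁
    have hu : HasDerivAt u X₀ s := hode s (z, φv)
    have hau : HasDerivAt (fun s' => a (u s')) (Da X₀) s :=
      (ha.differentiable (by simp) z₀).hasFDerivAt.comp_hasDerivAt s hu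
    have hstep1 : HasDerivAt A (∑ q, ((Da X₀) q * v₀ q + a z₀ q * W q)) s := by
      apply HasDerivAt.fun_sum
      intro q _
      have haq : HasDerivAt (fun s' => a (u s') q) ((Da X₀) q) s := by
        have := (ContinuousLinearMap.proj (R := ℝ) (φ := fun _ : Fin N => ℝ)
          q).hasFDerivAt.comp_hasDerivAt s hau
        exact this
      have hvq : HasDerivAt (fun s' => v s' q) (W q) s := by
        have := (ContinuousLinearMap.proj (R := ℝ) (φ := fun _ : Fin N => ℝ)
          q).hasFDerivAt.comp_hasDerivAt s (P3 s)
        exact this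
      exact haq.mul hvq
    -- Step 2: compute g s
    have hφP : HasFDerivAt (fun φ' => ev s (z, φ'))
        ((DΦ (s, φv)).comp (inr ℝ ℝ (Fin ℓ → ℝ))) φv := P1 s φv
    set P : (Fin ℓ → ℝ) →L[ℝ] (Fin N → ℝ) := (DΦ (s, φv)).comp (inr ℝ ℝ (Fin ℓ → ℝ)) with hP
    have hPw : P w = v₀ := rfl
    have hXQfun : Differentiable ℝ (fun φ' => XH (ev s (z, φ')) (φ' + s • αhat)) := by
      have h1 : Differentiable ℝ (fun φ' : Fin ℓ → ℝ => ev s (z, φ')) :=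
        fun x => (P1 s x).differentiableAt
      exact (hXHc.differentiable (by simp)).comp
        (h1.prodMk (differentiable_id.add (differentiable_const _)))
    set Q : (Fin ℓ → ℝ) →L[ℝ] (Fin N → ℝ) :=
      fderiv ℝ (fun φ' => XH (ev s (z, φ')) (φ' + s • αhat)) φv with hQd
    have hXQ : HasFDerivAt (fun φ' => XH (ev s (z, φ')) (φ' + s • αhat)) Q φv :=
      (hXQfun φv).hasFDerivAt
    have hQw : Q w = W := rfl
    have hRL : HasFDerivAt (fun φ' : Fin ℓ → ℝ => φ' + s • αhat)
        (ContinuousLinearMap.id ℝ (Fin ℓ → ℝ)) φv :=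
      (hasFDerivAt_id φv).add_const (s • αhat)
    have hHcomp : HasFDerivAt (fun φ' => H (ev s (z, φ')) (φ' + s • αhat))
        ((fderiv ℝ Hu (z₀, ψ₀)).comp (P.prod (ContinuousLinearMap.id ℝ (Fin ℓ → ℝ)))) φv :=
      by have := (hHud (z₀, ψ₀)).hasFDerivAt.comp φv (hφP.prodMk hRL); exact this
    have hHsplit : fderiv ℝ Hu (z₀, ψ₀) (v₀, w)
        = fderiv ℝ (fun z' => H z' ψ₀) z₀ v₀ + h s := by
      have e1 : fderiv ℝ (fun z' => H z' ψ₀) z₀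
          = (fderiv ℝ Hu (z₀, ψ₀)).comp (inl ℝ (Fin N → ℝ) (Fin ℓ → ℝ)) :=
        (hasFDerivAt_partial_fst' (hHud (z₀, ψ₀))).fderiv
      have e2 : fderiv ℝ (fun ψ => H (u s) ψ) (ψf s)
          = (fderiv ℝ Hu (z₀, ψ₀)).comp (inr ℝ (Fin N → ℝ) (Fin ℓ → ℝ)) :=
        (hasFDerivAt_partial_snd' (hHud (z₀, ψ₀))).fderiv
      have e3 : ((v₀, w) : (Fin N → ℝ) × (Fin ℓ → ℝ)) = (v₀, 0) + (0, w) := by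
        simp [Prod.ext_iff]
      rw [e3, map_add]
      congr 1
      · rw [e1]; rfl
      · rw [hhdef]; simp only [e2]; rfl
    -- assemble the derivative of φ' ↦ f (s, φ')
    have htot : HasFDerivAt (fun φ' => f (s, φ'))
        ((∑ i, (a z₀ i • ((ContinuousLinearMap.proj i).comp Q)
            + XH z₀ ψ₀ i • ((ContinuousLinearMap.proj i).comp (Da.comp P))))
          - (fderiv ℝ Hu (z₀, ψ₀)).comp (P.prod (ContinuousLinearMap.id ℝ (Fin ℓ → ℝ)))) φv := by
      apply HasFDerivAt.sub _ hHcomp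
      apply HasFDerivAt.fun_sum
      intro i _
      have hci : HasFDerivAt (fun φ' => a (ev s (z, φ')) i)
          ((ContinuousLinearMap.proj i).comp (Da.comp P)) φv := by
        have := (ContinuousLinearMap.proj (R := ℝ) (φ := fun _ : Fin N => ℝ)
          i).hasFDerivAt.comp φv
          (HasFDerivAt.comp (g := a) φv (ha.differentiable (by simp) z₀).hasFDerivAt hφP)
        exact this
      have hdi : HasFDerivAt (fun φ' => XH (ev s (z, φ')) (φ' + s • αhat) i)
          ((ContinuousLinearMap.proj i).comp Q) φv := by
        have := (ContinuousLinearMap.proj (R := ℝ) (φ := fun _ : Fin N => ℝ)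
          i).hasFDerivAt.comp φv hXQ
        exact this
      exact hci.mul hdi
    have hgs : g s = (∑ i, (a z₀ i * W i + X₀ i * (Da v₀) i))
        - (fderiv ℝ (fun z' => H z' ψ₀) z₀ v₀ + h s) := by
      have hPf : HasFDerivAt (fun φ' => f (s, φ'))
          ((fderiv ℝ f (s, φv)).comp (inr ℝ ℝ (Fin ℓ → ℝ))) φv :=
        hasFDerivAt_partial_snd' (hfd (s, φv))
      have e0 : g s = ((fderiv ℝ f (s, φv)).comp (inr ℝ ℝ (Fin ℓ → ℝ))) w := rfl
      rw [e0, hPf.unique htot]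
      rw [← hHsplit]
      simp only [ContinuousLinearMap.sub_apply, ContinuousLinearMap.coe_sum',
        Finset.sum_apply, ContinuousLinearMap.add_apply, ContinuousLinearMap.smul_apply,
        ContinuousLinearMap.coe_comp', Function.comp_apply, ContinuousLinearMap.proj_apply,
        smul_eq_mul]
      rfl
    -- Step 3: the Ω-cancellation
    have halg : g s + h s = ∑ q, ((Da X₀) q * v₀ q + a z₀ q * W q) := by
      rw [hgs]
      have hDH' : fderiv ℝ (fun z' => H z' ψ₀) z₀ v₀
          = ∑ p, v₀ p * (-∑ q, X₀ q * exactOmega a z₀ q p) := by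
        rw [clm_apply_eq_sum' (fderiv ℝ (fun z' => H z' ψ₀) z₀) v₀]
        exact Finset.sum_congr rfl fun p _ => by rw [smul_eq_mul, hDH z₀ ψ₀ p]
      have hDav : ∀ i, fderiv ℝ a z₀ v₀ i = ∑ p, v₀ p * fderiv ℝ a z₀ (Pi.single p 1) i := by
        intro i
        rw [clm_apply_eq_sum' (fderiv ℝ a z₀) v₀]
        simp [Finset.sum_apply]
      have hDaX : ∀ i, fderiv ℝ a z₀ X₀ i = ∑ p, X₀ p * fderiv ℝ a z₀ (Pi.single p 1) i := by
        intro i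
        rw [clm_apply_eq_sum' (fderiv ℝ a z₀) X₀]
        simp [Finset.sum_apply]
      have key : ∀ (XX vv : Fin N → ℝ) (D : Fin N → Fin N → ℝ),
          ∑ i, XX i * (∑ p, vv p * D p i) - ∑ p, vv p * (-∑ q, XX q * (D q p - D p q))
            = ∑ q, (∑ p, XX p * D p q) * vv q := by
        intro XX vv D
        have c1 : ∑ i, XX i * (∑ p, vv p * D p i) = ∑ p, ∑ i, XX i * (vv p * D p i) := by
          simp only [Finset.mul_sum]
          exact Finset.sum_comm
        have c2 : ∑ q, (∑ p, XX p * D p q) * vv q = ∑ q, ∑ p, vv q * XX p * D p q := by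
          refine Finset.sum_congr rfl fun q _ => ?_
          rw [Finset.sum_mul]
          exact Finset.sum_congr rfl fun p _ => by ring
        rw [c1, c2, ← Finset.sum_sub_distrib]
        refine Finset.sum_congr rfl fun p _ => ?_
        rw [mul_neg, sub_neg_eq_add, Finset.mul_sum, ← Finset.sum_add_distrib]
        refine Finset.sum_congr rfl fun q _ => ?_
        ring
      simp only [hDH', exactOmega, hDa]
      have goal' := key X₀ v₀ (fun p q => fderiv ℝ a z₀ (Pi.single p 1) q)
      have e1 : ∑ i, X₀ i * fderiv ℝ a z₀ v₀ i
          = ∑ i, X₀ i * ∑ p, v₀ p * fderiv ℝ a z₀ (Pi.single p 1) i :=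
        Finset.sum_congr rfl fun i _ => by rw [hDav i]
      have e3 : ∑ q, fderiv ℝ a z₀ X₀ q * v₀ q
          = ∑ q, (∑ p, X₀ p * fderiv ℝ a z₀ (Pi.single p 1) q) * v₀ q :=
        Finset.sum_congr rfl fun q _ => by rw [hDaX q]
      have hsplit1 : ∑ i, (a z₀ i * W i + X₀ i * fderiv ℝ a z₀ v₀ i)
          = ∑ i, a z₀ i * W i + ∑ i, X₀ i * fderiv ℝ a z₀ v₀ i := Finset.sum_add_distrib
      have hsplit2 : ∑ q, (fderiv ℝ a z₀ X₀ q * v₀ q + a z₀ q * W q)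
          = ∑ q, fderiv ℝ a z₀ X₀ q * v₀ q + ∑ q, a z₀ q * W q := Finset.sum_add_distrib
      rw [hsplit1, hsplit2, e1, e3]
      linarith [goal']
    rw [halg]
    exact hstep1
  -- continuity of g and h
  have hfC1 : ContDiff ℝ (⊤ : ℕ∞) (fderiv ℝ f) := hf.fderiv_right (by simp)
  have hgc : Continuous g := by
    have hc : Continuous fun s : ℝ => fderiv ℝ f (s, φv) :=
      hfC1.continuous.comp (continuous_id.prodMk continuous_const)
    exact hc.clm_apply continuous_const
  have hh_eq : ∀ s : ℝ, h s = fderiv ℝ Hu (u s, ψf s) ((0 : Fin N → ℝ), w) := by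
    intro s
    have h1 : HasFDerivAt (fun ψ => H (u s) ψ)
        ((fderiv ℝ Hu (u s, ψf s)).comp (inr ℝ (Fin N → ℝ) (Fin ℓ → ℝ))) (ψf s) :=
      hasFDerivAt_partial_snd' (hHud (u s, ψf s))
    rw [hhdef]
    simp only
    rw [h1.fderiv]
    rfl
  have hhc : Continuous h := by
    have hHC1 : ContDiff ℝ (⊤ : ℕ∞) (fderiv ℝ Hu) := hH.fderiv_right (by simp)
    have huc : Continuous u := hΦ.continuous.comp (continuous_id.prodMk continuous_const)
    have hψfc : Continuous ψf := continuous_const.add (continuous_id.smul continuous_const)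
    have hc : Continuous fun s => fderiv ℝ Hu (u s, ψf s) :=
      hHC1.continuous.comp (huc.prodMk hψfc)
    have hc2 : Continuous fun s => fderiv ℝ Hu (u s, ψf s) ((0 : Fin N → ℝ), w) :=
      hc.clm_apply continuous_const
    rwa [show (fun s => fderiv ℝ Hu (u s, ψf s) ((0 : Fin N → ℝ), w)) = h from
      funext fun s => (hh_eq s).symm] at hc2
  have hghInt : IntervalIntegrable (fun s => g s + h s) MeasureTheory.volume 0 t :=
    (hgc.add hhc).intervalIntegrable 0 t
  have hhInt : IntervalIntegrable h MeasureTheory.volume 0 t := hhc.intervalIntegrable 0 t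
  have hFTC : (∫ s in (0:ℝ)..t, (g s + h s)) = A t - A 0 :=
    intervalIntegral.integral_eq_sub_of_hasDerivAt (fun x _ => hA x) hghInt
  -- differentiation under the integral sign
  have hprim : (fun φ' => primFn αhat a XH H ev t z φ')
      = fun φ' => ∫ s in (0:ℝ)..t, f (s, φ') := by
    funext φ'
    rw [primFn]
  have hF'cont : Continuous fun s => (fderiv ℝ f (s, φv)).comp (inr ℝ ℝ (Fin ℓ → ℝ)) :=
    (hfC1.continuous.comp (continuous_id.prodMk continuous_const)).clm_comp continuous_const
  have hF'int : IntervalIntegrable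
      (fun s => (fderiv ℝ f (s, φv)).comp (inr ℝ ℝ (Fin ℓ → ℝ))) MeasureTheory.volume 0 t :=
    hF'cont.intervalIntegrable 0 t
  have hDint : HasFDerivAt (fun φ' => ∫ s in (0:ℝ)..t, f (s, φ'))
      (∫ s in (0:ℝ)..t, (fderiv ℝ f (s, φv)).comp (inr ℝ ℝ (Fin ℓ → ℝ))) φv := by
    have hK : IsCompact ((Set.uIcc (0:ℝ) t) ×ˢ Metric.closedBall φv 1) :=
      isCompact_uIcc.prod (isCompact_closedBall φv 1)
    obtain ⟨C, hC⟩ := hK.exists_bound_of_continuousOn hfC1.continuous.continuousOn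
    have hC0 : 0 ≤ C := le_trans (norm_nonneg _) (hC (0, φv)
      ⟨Set.left_mem_uIcc, Metric.mem_closedBall_self zero_le_one⟩)
    have hinr : ‖inr ℝ ℝ (Fin ℓ → ℝ)‖ ≤ 1 := by
      apply ContinuousLinearMap.opNorm_le_bound _ zero_le_one
      intro y
      rw [one_mul, ContinuousLinearMap.inr_apply, Prod.norm_def]
      rw [norm_zero, max_eq_right (norm_nonneg y)]
    refine intervalIntegral.hasFDerivAt_integral_of_dominated_of_fderiv_le
      (F := fun x s => f (s, x))
      (F' := fun x s => (fderiv ℝ f (s, x)).comp (inr ℝ ℝ (Fin ℓ → ℝ)))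
      (bound := fun _ => C) (Metric.ball_mem_nhds φv zero_lt_one) ?_ ?_ ?_ ?_ ?_ ?_
    · exact Filter.Eventually.of_forall fun x =>
        ((hf.continuous.comp (continuous_id.prodMk continuous_const)).aestronglyMeasurable)
    · exact (hf.continuous.comp (continuous_id.prodMk continuous_const)).intervalIntegrable 0 t
    · exact hF'cont.aestronglyMeasurable
    · refine Filter.Eventually.of_forall fun s hs => fun x hx => ?_
      calc ‖(fderiv ℝ f (s, x)).comp (inr ℝ ℝ (Fin ℓ → ℝ))‖
          ≤ ‖fderiv ℝ f (s, x)‖ * ‖inr ℝ ℝ (Fin ℓ → ℝ)‖ :=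
            ContinuousLinearMap.opNorm_comp_le _ _
        _ ≤ C * 1 := by
            apply mul_le_mul _ hinr (norm_nonneg _) hC0
            exact hC (s, x) ⟨Set.uIoc_subset_uIcc hs, Metric.ball_subset_closedBall hx⟩
        _ = C := mul_one C
    · exact intervalIntegrable_const
    · exact Filter.Eventually.of_forall fun s hs => fun x hx =>
        hasFDerivAt_partial_snd' (hfd (s, x))
  -- assembly
  have hL : fderiv ℝ (fun φ' => primFn αhat a XH H ev t z φ') φv w
      = ∫ s in (0:ℝ)..t, g s := by
    rw [hprim, hDint.fderiv, ContinuousLinearMap.intervalIntegral_apply hF'int w]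
    rfl
  have hgsplit : (∫ s in (0:ℝ)..t, g s)
      = (∫ s in (0:ℝ)..t, (g s + h s)) - ∫ s in (0:ℝ)..t, h s := by
    rw [← intervalIntegral.integral_sub hghInt hhInt]
    congr 1
    funext s
    ring
  have hA0 : A 0 = 0 := by
    rw [hAdef]
    simp only [P4]
    simp
  rw [hL, hgsplit, hFTC, hA0, sub_zero, P5]
end

section
/- In the setting of the moment map lemma for the parametrized quasi-periodic Hamiltonian flow φ_{t,ε}(z,φ) with Hamiltonian H_ε, the moment map component associated to ε satisfies 𝓜^ε(φ_{t,ε}(z,φ), τ(t,ε,φ)) = ∫₀ᵗ ∂_εH_ε(φ_{s,ε}(z,φ), φ+α̂s) ds; that is, a(φ_{t,ε}(z,φ))ᵀ ∂_εφ_{t,ε}(z,φ) − ∂_ε p_{t,ε}(z,φ) = ∫₀ᵗ ∂_εH_ε(φ_{s,ε}(z,φ), φ+α̂s) ds. -/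
/-- Primitive function of the parametrized quasi-periodic Hamiltonian flow:
`p_{t,ε}(z,φ) = ∫₀ᵗ (a(φ_{s,ε})ᵀ X_{H_ε}(φ_{s,ε}, φ+α̂s) − H_ε(φ_{s,ε}, φ+α̂s)) ds`. -/
noncomputable def primFnE {N ℓ : ℕ} (αhat : Fin ℓ → ℝ)
    (a : (Fin N → ℝ) → (Fin N → ℝ))
    (XH : ℝ → (Fin N → ℝ) → (Fin ℓ → ℝ) → (Fin N → ℝ))
    (H : ℝ → (Fin N → ℝ) → (Fin ℓ → ℝ) → ℝ)
    (ev : ℝ → ℝ → ((Fin N → ℝ) × (Fin ℓ → ℝ)) → (Fin N → ℝ))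
    (ε t : ℝ) (x : (Fin N → ℝ) × (Fin ℓ → ℝ)) : ℝ :=
  ∫ s in (0:ℝ)..t,
    ((∑ q, a (ev ε s x) q * XH ε (ev ε s x) (x.2 + s • αhat) q)
      - H ε (ev ε s x) (x.2 + s • αhat))

section Aux

lemma MME.clm_pi_decomp {N : ℕ} {E : Type*} [NormedAddCommGroup E] [NormedSpace ℝ E]
    (L : (Fin N → ℝ) →L[ℝ] E) (w : Fin N → ℝ) :
    L w = ∑ p, w p • L (Pi.single p 1) := by
  conv_lhs => rw [← Finset.univ_sum_single w]
  rw [map_sum]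
  refine Finset.sum_congr rfl fun p _ => ?_
  rw [← map_smul]
  congr 1
  ext j
  by_cases h : j = p <;> simp [Pi.single_apply, h]

lemma MME.pd_fst {E : Type*} [NormedAddCommGroup E] [NormedSpace ℝ E]
    (g : ℝ × ℝ → E) (p : ℝ × ℝ) (hg : DifferentiableAt ℝ g p) :
    HasDerivAt (fun e => g (e, p.2)) (fderiv ℝ g p (1, 0)) p.1 := by
  have hcurve : HasDerivAt (fun e : ℝ => ((e, p.2) : ℝ × ℝ)) ((1 : ℝ), (0 : ℝ)) p.1 :=
    (hasDerivAt_id p.1).prodMk (hasDerivAt_const p.1 p.2)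
  simpa [Function.comp_def] using (hg.hasFDerivAt.comp_hasDerivAt p.1 hcurve)

lemma MME.pd_snd {E : Type*} [NormedAddCommGroup E] [NormedSpace ℝ E]
    (g : ℝ × ℝ → E) (p : ℝ × ℝ) (hg : DifferentiableAt ℝ g p) :
    HasDerivAt (fun s => g (p.1, s)) (fderiv ℝ g p (0, 1)) p.2 := by
  have hcurve : HasDerivAt (fun s : ℝ => ((p.1, s) : ℝ × ℝ)) ((0 : ℝ), (1 : ℝ)) p.2 :=
    (hasDerivAt_const p.2 p.1).prodMk (hasDerivAt_id p.2)
  simpa [Function.comp_def] using (hg.hasFDerivAt.comp_hasDerivAt p.2 hcurve)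

lemma MME.sum_alg {N : ℕ} (X w : Fin N → ℝ) (D : Fin N → Fin N → ℝ) :
    (∑ q, (∑ r, X r * D r q) * w q) - (∑ q, (∑ r, w r * D r q) * X q)
      + ∑ r, w r * (-∑ q, X q * (D q r - D r q)) = 0 := by
  have e1 : (∑ q, (∑ r, X r * D r q) * w q) = ∑ q, ∑ r, w r * (X q * D q r) := by
    simp only [Finset.sum_mul]
    rw [Finset.sum_comm]
    exact Finset.sum_congr rfl fun q _ => Finset.sum_congr rfl fun r _ => by ring
  have e2 : (∑ q, (∑ r, w r * D r q) * X q) = ∑ q, ∑ r, w r * (X q * D r q) := by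
    simp only [Finset.sum_mul]
    exact Finset.sum_congr rfl fun q _ => Finset.sum_congr rfl fun r _ => by ring
  have e3 : (∑ r, w r * (-∑ q, X q * (D q r - D r q)))
      = ∑ q, ∑ r, (w r * (X q * D r q) - w r * (X q * D q r)) := by
    rw [Finset.sum_comm]
    exact Finset.sum_congr rfl fun r _ => by
      rw [← Finset.sum_neg_distrib, Finset.mul_sum]
      exact Finset.sum_congr rfl fun q _ => by ring
  rw [e1, e2, e3, ← Finset.sum_sub_distrib, ← Finset.sum_add_distrib]
  refine Finset.sum_eq_zero fun q _ => ?_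
  rw [← Finset.sum_sub_distrib, ← Finset.sum_add_distrib]
  exact Finset.sum_eq_zero fun r _ => by ring

lemma MME.aux_key {N ℓ : ℕ}
    (a : (Fin N → ℝ) → (Fin N → ℝ))
    (H : ℝ → (Fin N → ℝ) → (Fin ℓ → ℝ) → ℝ)
    (hH : ContDiff ℝ (⊤ : ℕ∞)
      (fun q : ℝ × ((Fin N → ℝ) × (Fin ℓ → ℝ)) => H q.1 q.2.1 q.2.2))
    (XH : ℝ → (Fin N → ℝ) → (Fin ℓ → ℝ) → (Fin N → ℝ))
    (hDH : ∀ (ε : ℝ) (z : Fin N → ℝ) (φv : Fin ℓ → ℝ) (p : Fin N),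
      fderiv ℝ (fun z' => H ε z' φv) z (Pi.single p 1)
        = -∑ q, XH ε z φv q * exactOmega a z q p)
    (e : ℝ) (z : Fin N → ℝ) (φv : Fin ℓ → ℝ) (w : Fin N → ℝ) :
    (∑ q, fderiv ℝ a z (XH e z φv) q * w q)
      - (∑ q, fderiv ℝ a z w q * XH e z φv q)
      + fderiv ℝ (fun q : ℝ × ((Fin N → ℝ) × (Fin ℓ → ℝ)) => H q.1 q.2.1 q.2.2)
          (e, (z, φv)) (1, (w, 0))
    = fderiv ℝ (fun q : ℝ × ((Fin N → ℝ) × (Fin ℓ → ℝ)) => H q.1 q.2.1 q.2.2)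
          (e, (z, φv)) (1, 0) := by
  have hsplit : ((1 : ℝ), ((w, 0) : (Fin N → ℝ) × (Fin ℓ → ℝ)))
      = ((1 : ℝ), (0 : (Fin N → ℝ) × (Fin ℓ → ℝ)))
        + ((0 : ℝ), ((w, (0 : Fin ℓ → ℝ)) : (Fin N → ℝ) × (Fin ℓ → ℝ))) := by
    simp [Prod.ext_iff]
  rw [hsplit, map_add]
  have hinner : HasFDerivAt
      (fun z' : Fin N → ℝ => ((e, (z', φv)) : ℝ × ((Fin N → ℝ) × (Fin ℓ → ℝ))))
      (((0 : (Fin N → ℝ) →L[ℝ] ℝ)).prod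
        ((ContinuousLinearMap.id ℝ (Fin N → ℝ)).prod (0 : (Fin N → ℝ) →L[ℝ] (Fin ℓ → ℝ)))) z :=
    (hasFDerivAt_const e z).prodMk ((hasFDerivAt_id z).prodMk (hasFDerivAt_const φv z))
  have hcomp : fderiv ℝ (fun z' => H e z' φv) z =
      (fderiv ℝ (fun q : ℝ × ((Fin N → ℝ) × (Fin ℓ → ℝ)) => H q.1 q.2.1 q.2.2)
          (e, (z, φv))).comp
        (((0 : (Fin N → ℝ) →L[ℝ] ℝ)).prod
          ((ContinuousLinearMap.id ℝ (Fin N → ℝ)).prod (0 : (Fin N → ℝ) →L[ℝ] (Fin ℓ → ℝ)))) :=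
    by have h := ((hH.differentiable (by simp) (e, (z, φv))).hasFDerivAt.comp z hinner).fderiv; exact h
  have hz : fderiv ℝ (fun q : ℝ × ((Fin N → ℝ) × (Fin ℓ → ℝ)) => H q.1 q.2.1 q.2.2)
        (e, (z, φv)) ((0 : ℝ), ((w, (0 : Fin ℓ → ℝ)) : (Fin N → ℝ) × (Fin ℓ → ℝ)))
      = fderiv ℝ (fun z' => H e z' φv) z w := by
    rw [hcomp]; rfl
  rw [hz]
  have hdec : fderiv ℝ (fun z' => H e z' φv) z w
      = ∑ r, w r * (-∑ q, XH e z φv q * exactOmega a z q r) := by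
    rw [MME.clm_pi_decomp]
    exact Finset.sum_congr rfl fun r _ => by rw [hDH, smul_eq_mul]
  rw [hdec]
  have hda : ∀ u : Fin N → ℝ,
      (fun q => fderiv ℝ a z u q) = fun q => ∑ r, u r * fderiv ℝ a z (Pi.single r 1) q := by
    intro u
    funext q
    rw [MME.clm_pi_decomp (fderiv ℝ a z) u]
    simp [Finset.sum_apply]
  have h1 : (∑ q, fderiv ℝ a z (XH e z φv) q * w q)
      = ∑ q, (∑ r, XH e z φv r * fderiv ℝ a z (Pi.single r 1) q) * w q :=
    Finset.sum_congr rfl fun q _ => by rw [congrFun (hda (XH e z φv)) q]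
  have h2 : (∑ q, fderiv ℝ a z w q * XH e z φv q)
      = ∑ q, (∑ r, w r * fderiv ℝ a z (Pi.single r 1) q) * XH e z φv q :=
    Finset.sum_congr rfl fun q _ => by rw [congrFun (hda w) q]
  have key := MME.sum_alg (XH e z φv) w (fun r q => fderiv ℝ a z (Pi.single r 1) q)
  simp only [exactOmega]
  rw [h1, h2]
  linarith [key]

/-- the `ε`-partial of the integrand of the primitive function. -/
noncomputable def MME.IeFun {N ℓ : ℕ} (αhat φ0 : Fin ℓ → ℝ)
    (a : (Fin N → ℝ) → (Fin N → ℝ))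
    (H : ℝ → (Fin N → ℝ) → (Fin ℓ → ℝ) → ℝ)
    (XH : ℝ → (Fin N → ℝ) → (Fin ℓ → ℝ) → (Fin N → ℝ))
    (G : ℝ × ℝ → (Fin N → ℝ)) (p : ℝ × ℝ) : ℝ :=
  (∑ q, (fderiv ℝ a (G p) (fderiv ℝ G p (1, 0)) q * XH p.1 (G p) (φ0 + p.2 • αhat) q
      + a (G p) q * fderiv ℝ (fderiv ℝ G) p (1, 0) (0, 1) q))
    - fderiv ℝ (fun q : ℝ × ((Fin N → ℝ) × (Fin ℓ → ℝ)) => H q.1 q.2.1 q.2.2)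
        (p.1, (G p, φ0 + p.2 • αhat)) (1, (fderiv ℝ G p (1, 0), 0))

/-- the `ε`-partial of `H`. -/
noncomputable def MME.HpFun {N ℓ : ℕ} (αhat φ0 : Fin ℓ → ℝ)
    (H : ℝ → (Fin N → ℝ) → (Fin ℓ → ℝ) → ℝ)
    (G : ℝ × ℝ → (Fin N → ℝ)) (p : ℝ × ℝ) : ℝ :=
  fderiv ℝ (fun q : ℝ × ((Fin N → ℝ) × (Fin ℓ → ℝ)) => H q.1 q.2.1 q.2.2)
    (p.1, (G p, φ0 + p.2 • αhat)) (1, 0)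

lemma MME.aux_dA {N : ℕ}
    (a : (Fin N → ℝ) → (Fin N → ℝ)) (ha : ContDiff ℝ (⊤ : ℕ∞) a)
    (G : ℝ × ℝ → (Fin N → ℝ)) (hG : ContDiff ℝ (⊤ : ℕ∞) G) (p : ℝ × ℝ) :
    HasDerivAt (fun s => ∑ q, a (G (p.1, s)) q * fderiv ℝ G (p.1, s) (1, 0) q)
      (∑ q, (fderiv ℝ a (G p) (fderiv ℝ G p (0, 1)) q * fderiv ℝ G p (1, 0) q
        + a (G p) q * fderiv ℝ (fderiv ℝ G) p (0, 1) (1, 0) q)) p.2 := by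
  have hGd : Differentiable ℝ G := hG.differentiable (by simp)
  have hDG1 : ContDiff ℝ 1 (fderiv ℝ G) := hG.fderiv_right (by exact WithTop.coe_le_coe.2 (le_top : ((1 + 1 : ℕ∞)) ≤ ⊤))
  have hDGd : Differentiable ℝ (fderiv ℝ G) := hDG1.differentiable (by simp)
  have hcurve : HasDerivAt (fun s => G (p.1, s)) (fderiv ℝ G p (0, 1)) p.2 :=
    MME.pd_snd G p (hGd p)
  have hDGcurve : HasDerivAt (fun s => fderiv ℝ G (p.1, s))
      (fderiv ℝ (fderiv ℝ G) p (0, 1)) p.2 := MME.pd_snd (fderiv ℝ G) p (hDGd p)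
  apply HasDerivAt.fun_sum
  intro q _
  have h1 : HasDerivAt (fun s => a (G (p.1, s)) q)
      (fderiv ℝ a (G p) (fderiv ℝ G p (0, 1)) q) p.2 := by
    have hc := (ha.differentiable (by simp) (G p)).hasFDerivAt.comp_hasDerivAt p.2 hcurve
    simpa [Function.comp_def] using
      ((ContinuousLinearMap.proj (R := ℝ) (φ := fun _ : Fin N => ℝ) q).hasFDerivAt.comp_hasDerivAt
        p.2 hc)
  have h2 : HasDerivAt (fun s => fderiv ℝ G (p.1, s) (1, 0) q)
      (fderiv ℝ (fderiv ℝ G) p (0, 1) (1, 0) q) p.2 := by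
    have h2a := hDGcurve.clm_apply (hasDerivAt_const p.2 (((1 : ℝ), (0 : ℝ)) : ℝ × ℝ))
    simp only [map_zero, add_zero] at h2a
    simpa [Function.comp_def] using
      ((ContinuousLinearMap.proj (R := ℝ) (φ := fun _ : Fin N => ℝ) q).hasFDerivAt.comp_hasDerivAt
        p.2 h2a)
  exact h1.mul h2

lemma MME.aux_dI {N ℓ : ℕ} (αhat : Fin ℓ → ℝ) (φ0 : Fin ℓ → ℝ)
    (a : (Fin N → ℝ) → (Fin N → ℝ)) (ha : ContDiff ℝ (⊤ : ℕ∞) a)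
    (H : ℝ → (Fin N → ℝ) → (Fin ℓ → ℝ) → ℝ)
    (hH : ContDiff ℝ (⊤ : ℕ∞)
      (fun q : ℝ × ((Fin N → ℝ) × (Fin ℓ → ℝ)) => H q.1 q.2.1 q.2.2))
    (XH : ℝ → (Fin N → ℝ) → (Fin ℓ → ℝ) → (Fin N → ℝ))
    (G : ℝ × ℝ → (Fin N → ℝ)) (hG : ContDiff ℝ (⊤ : ℕ∞) G)
    (hGX : ∀ p : ℝ × ℝ, fderiv ℝ G p (0, 1) = XH p.1 (G p) (φ0 + p.2 • αhat))
    (p : ℝ × ℝ) :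
    HasDerivAt (fun e =>
        (∑ q, a (G (e, p.2)) q * XH e (G (e, p.2)) (φ0 + p.2 • αhat) q)
          - H e (G (e, p.2)) (φ0 + p.2 • αhat))
      (MME.IeFun αhat φ0 a H XH G p) p.1 := by
  have hGd : Differentiable ℝ G := hG.differentiable (by simp)
  have hDG1 : ContDiff ℝ 1 (fderiv ℝ G) := hG.fderiv_right (by exact WithTop.coe_le_coe.2 (le_top : ((1 + 1 : ℕ∞)) ≤ ⊤))
  have hDGd : Differentiable ℝ (fderiv ℝ G) := hDG1.differentiable (by simp)
  have hcurve : HasDerivAt (fun e => G (e, p.2)) (fderiv ℝ G p (1, 0)) p.1 :=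
    MME.pd_fst G p (hGd p)
  have hDGcurve : HasDerivAt (fun e => fderiv ℝ G (e, p.2))
      (fderiv ℝ (fderiv ℝ G) p (1, 0)) p.1 := MME.pd_fst (fderiv ℝ G) p (hDGd p)
  have hsum : HasDerivAt (fun e => ∑ q, a (G (e, p.2)) q * fderiv ℝ G (e, p.2) (0, 1) q)
      (∑ q, (fderiv ℝ a (G p) (fderiv ℝ G p (1, 0)) q * fderiv ℝ G p (0, 1) q
        + a (G p) q * fderiv ℝ (fderiv ℝ G) p (1, 0) (0, 1) q)) p.1 := by
    apply HasDerivAt.fun_sum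
    intro q _
    have h1 : HasDerivAt (fun e => a (G (e, p.2)) q)
        (fderiv ℝ a (G p) (fderiv ℝ G p (1, 0)) q) p.1 := by
      have hc := (ha.differentiable (by simp) (G p)).hasFDerivAt.comp_hasDerivAt p.1 hcurve
      simpa [Function.comp_def] using
        ((ContinuousLinearMap.proj (R := ℝ)
          (φ := fun _ : Fin N => ℝ) q).hasFDerivAt.comp_hasDerivAt p.1 hc)
    have h2 : HasDerivAt (fun e => fderiv ℝ G (e, p.2) (0, 1) q)
        (fderiv ℝ (fderiv ℝ G) p (1, 0) (0, 1) q) p.1 := by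
      have h2a := hDGcurve.clm_apply (hasDerivAt_const p.1 (((0 : ℝ), (1 : ℝ)) : ℝ × ℝ))
      simp only [map_zero, add_zero] at h2a
      simpa [Function.comp_def] using
        ((ContinuousLinearMap.proj (R := ℝ)
          (φ := fun _ : Fin N => ℝ) q).hasFDerivAt.comp_hasDerivAt p.1 h2a)
    exact h1.mul h2
  have hfun_eq : (fun e : ℝ => ∑ q, a (G (e, p.2)) q * fderiv ℝ G (e, p.2) (0, 1) q)
      = fun e : ℝ => ∑ q, a (G (e, p.2)) q * XH e (G (e, p.2)) (φ0 + p.2 • αhat) q := by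
    funext e
    simp only [hGX (e, p.2)]
  rw [hfun_eq, hGX p] at hsum
  have hcurve2 : HasDerivAt
      (fun e => ((e, (G (e, p.2), φ0 + p.2 • αhat)) : ℝ × ((Fin N → ℝ) × (Fin ℓ → ℝ))))
      ((1 : ℝ), (fderiv ℝ G p (1, 0), (0 : Fin ℓ → ℝ))) p.1 :=
    (hasDerivAt_id p.1).prodMk (hcurve.prodMk (hasDerivAt_const p.1 (φ0 + p.2 • αhat)))
  have hHpart : HasDerivAt (fun e => H e (G (e, p.2)) (φ0 + p.2 • αhat))
      (fderiv ℝ (fun q : ℝ × ((Fin N → ℝ) × (Fin ℓ → ℝ)) => H q.1 q.2.1 q.2.2)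
        (p.1, (G p, φ0 + p.2 • αhat)) (1, (fderiv ℝ G p (1, 0), 0))) p.1 := by
    have hHd := (hH.differentiable (by simp) (p.1, (G p, φ0 + p.2 • αhat))).hasFDerivAt
    exact hHd.comp_hasDerivAt p.1 hcurve2
  exact hsum.sub hHpart

lemma MME.main_core {N ℓ : ℕ} (αhat φ0 : Fin ℓ → ℝ)
    (a : (Fin N → ℝ) → (Fin N → ℝ)) (ha : ContDiff ℝ (⊤ : ℕ∞) a)
    (H : ℝ → (Fin N → ℝ) → (Fin ℓ → ℝ) → ℝ)
    (hH : ContDiff ℝ (⊤ : ℕ∞)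
      (fun q : ℝ × ((Fin N → ℝ) × (Fin ℓ → ℝ)) => H q.1 q.2.1 q.2.2))
    (XH : ℝ → (Fin N → ℝ) → (Fin ℓ → ℝ) → (Fin N → ℝ))
    (hXHc : ContDiff ℝ (⊤ : ℕ∞)
      (fun q : ℝ × ((Fin N → ℝ) × (Fin ℓ → ℝ)) => XH q.1 q.2.1 q.2.2))
    (hDH : ∀ (ε : ℝ) (z : Fin N → ℝ) (φv : Fin ℓ → ℝ) (p : Fin N),
      fderiv ℝ (fun z' => H ε z' φv) z (Pi.single p 1)
        = -∑ q, XH ε z φv q * exactOmega a z q p)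
    (G : ℝ × ℝ → (Fin N → ℝ)) (hG : ContDiff ℝ (⊤ : ℕ∞) G)
    (hGX : ∀ p : ℝ × ℝ, fderiv ℝ G p (0, 1) = XH p.1 (G p) (φ0 + p.2 • αhat))
    (z0 : Fin N → ℝ) (hG0 : ∀ e : ℝ, G (e, 0) = z0)
    (ε t : ℝ) :
    (∑ q, a (G (ε, t)) q * (deriv (fun e => G (e, t)) ε) q)
      - deriv (fun e => ∫ s in (0:ℝ)..t,
          ((∑ q, a (G (e, s)) q * XH e (G (e, s)) (φ0 + s • αhat) q)
            - H e (G (e, s)) (φ0 + s • αhat))) ε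
    = ∫ s in (0:ℝ)..t, deriv (fun e => H e (G (ε, s)) (φ0 + s • αhat)) ε := by
  have hGd : Differentiable ℝ G := hG.differentiable (by simp)
  have hDG1 : ContDiff ℝ 1 (fderiv ℝ G) := hG.fderiv_right (by exact WithTop.coe_le_coe.2 (le_top : ((1 + 1 : ℕ∞)) ≤ ⊤))
  -- continuity facts
  have hc1 : Continuous fun p : ℝ × ℝ =>
      ((p.1, (G p, φ0 + p.2 • αhat)) : ℝ × ((Fin N → ℝ) × (Fin ℓ → ℝ))) :=
    continuous_fst.prodMk (hG.continuous.prodMk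
      (continuous_const.add (continuous_snd.smul continuous_const)))
  have contaG : Continuous fun p : ℝ × ℝ => a (G p) := ha.continuous.comp hG.continuous
  have contXHF : Continuous fun p : ℝ × ℝ => XH p.1 (G p) (φ0 + p.2 • αhat) :=
    hXHc.continuous.comp hc1
  have contH : Continuous fun p : ℝ × ℝ => H p.1 (G p) (φ0 + p.2 • αhat) :=
    hH.continuous.comp hc1
  have contv : Continuous fun p : ℝ × ℝ => fderiv ℝ G p (1, 0) :=
    hDG1.continuous.clm_apply continuous_const
  have contDa : Continuous fun p : ℝ × ℝ => fderiv ℝ a (G p) :=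
    (ha.continuous_fderiv (by simp)).comp hG.continuous
  have contD2 : Continuous (fderiv ℝ (fderiv ℝ G)) := hDG1.continuous_fderiv (by simp)
  have contHd : Continuous fun p : ℝ × ℝ =>
      fderiv ℝ (fun q : ℝ × ((Fin N → ℝ) × (Fin ℓ → ℝ)) => H q.1 q.2.1 q.2.2)
        (p.1, (G p, φ0 + p.2 • αhat)) :=
    (hH.continuous_fderiv (by simp)).comp hc1
  have contI : Continuous fun p : ℝ × ℝ =>
      (∑ q, a (G p) q * XH p.1 (G p) (φ0 + p.2 • αhat) q)
        - H p.1 (G p) (φ0 + p.2 • αhat) := by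
    refine Continuous.sub ?_ contH
    exact continuous_finset_sum _ fun q _ =>
      ((continuous_apply q).comp contaG).mul ((continuous_apply q).comp contXHF)
  have contIe : Continuous (MME.IeFun αhat φ0 a H XH G) := by
    unfold MME.IeFun
    refine Continuous.sub ?_
      (contHd.clm_apply (continuous_const.prodMk (contv.prodMk continuous_const)))
    exact continuous_finset_sum _ fun q _ =>
      (((continuous_apply q).comp (contDa.clm_apply contv)).mul
        ((continuous_apply q).comp contXHF)).add
      (((continuous_apply q).comp contaG).mul
        ((continuous_apply q).comp
          ((contD2.clm_apply continuous_const).clm_apply continuous_const)))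
  have contHp : Continuous (MME.HpFun αhat φ0 H G) := by
    unfold MME.HpFun
    exact contHd.clm_apply continuous_const
  -- key pointwise identity
  have hkey : ∀ p : ℝ × ℝ,
      (∑ q, (fderiv ℝ a (G p) (fderiv ℝ G p (0, 1)) q * fderiv ℝ G p (1, 0) q
        + a (G p) q * fderiv ℝ (fderiv ℝ G) p (0, 1) (1, 0) q))
      = MME.IeFun αhat φ0 a H XH G p + MME.HpFun αhat φ0 H G p := by
    intro p
    have hsym := (hG.contDiffAt (x := p)).isSymmSndFDerivAt (by rw [minSmoothness_of_isRCLikeNormedField]; exact WithTop.coe_le_coe.2 (le_top : ((2 : ℕ∞)) ≤ ⊤))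
      (((0 : ℝ), (1 : ℝ)) : ℝ × ℝ) (((1 : ℝ), (0 : ℝ)) : ℝ × ℝ)
    have hk := MME.aux_key a H hH XH hDH p.1 (G p) (φ0 + p.2 • αhat) (fderiv ℝ G p (1, 0))
    unfold MME.IeFun MME.HpFun
    rw [hGX p, hsym]
    simp only [Finset.sum_add_distrib]
    linarith [hk]
  -- derivatives of the three terms in the goal
  have hd1 : deriv (fun e => G (e, t)) ε = fderiv ℝ G (ε, t) (1, 0) :=
    (MME.pd_fst G (ε, t) (hGd (ε, t))).deriv
  -- derivative of the primitive function via differentiation under the integral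
  have hIder : ∀ (e s : ℝ), HasDerivAt (fun e' =>
        (∑ q, a (G (e', s)) q * XH e' (G (e', s)) (φ0 + s • αhat) q)
          - H e' (G (e', s)) (φ0 + s • αhat))
      (MME.IeFun αhat φ0 a H XH G (e, s)) e :=
    fun e s => MME.aux_dI αhat φ0 a ha H hH XH G hG hGX (e, s)
  obtain ⟨C, hC⟩ := (IsCompact.prod (isCompact_Icc (a := ε - 1) (b := ε + 1))
    (isCompact_uIcc (a := (0:ℝ)) (b := t))).exists_bound_of_continuousOn
    contIe.continuousOn
  have hprim : HasDerivAt (fun e => ∫ s in (0:ℝ)..t,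
        ((∑ q, a (G (e, s)) q * XH e (G (e, s)) (φ0 + s • αhat) q)
          - H e (G (e, s)) (φ0 + s • αhat)))
      (∫ s in (0:ℝ)..t, MME.IeFun αhat φ0 a H XH G (ε, s)) ε := by
    refine (intervalIntegral.hasDerivAt_integral_of_dominated_loc_of_deriv_le
      (F := fun e s => (∑ q, a (G (e, s)) q * XH e (G (e, s)) (φ0 + s • αhat) q)
          - H e (G (e, s)) (φ0 + s • αhat))
      (F' := fun e s => MME.IeFun αhat φ0 a H XH G (e, s))
      (bound := fun _ => C) (Metric.ball_mem_nhds ε one_pos) ?_ ?_ ?_ ?_ ?_ ?_).2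
    · exact Filter.Eventually.of_forall fun e =>
        ((contI.comp (Continuous.prodMk_right e)).aestronglyMeasurable)
    · exact (contI.comp (Continuous.prodMk_right ε)).intervalIntegrable 0 t
    · exact (contIe.comp (Continuous.prodMk_right ε)).aestronglyMeasurable
    · refine Filter.Eventually.of_forall fun s hs e he => ?_
      refine hC (e, s) ⟨?_, Set.Ioc_subset_Icc_self hs⟩
      rw [Real.ball_eq_Ioo] at he
      exact Set.Ioo_subset_Icc_self he
    · exact intervalIntegrable_const
    · exact Filter.Eventually.of_forall fun s _ e _ => hIder e s
  -- FTC for the A-term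
  have hint1 : IntervalIntegrable (fun s => MME.IeFun αhat φ0 a H XH G (ε, s))
      MeasureTheory.volume 0 t :=
    (contIe.comp (Continuous.prodMk_right ε)).intervalIntegrable 0 t
  have hint2 : IntervalIntegrable (fun s => MME.HpFun αhat φ0 H G (ε, s))
      MeasureTheory.volume 0 t :=
    (contHp.comp (Continuous.prodMk_right ε)).intervalIntegrable 0 t
  have hFTC : (∫ s in (0:ℝ)..t,
        (MME.IeFun αhat φ0 a H XH G (ε, s) + MME.HpFun αhat φ0 H G (ε, s)))
      = (∑ q, a (G (ε, t)) q * fderiv ℝ G (ε, t) (1, 0) q)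
        - (∑ q, a (G (ε, 0)) q * fderiv ℝ G (ε, 0) (1, 0) q) := by
    refine intervalIntegral.integral_eq_sub_of_hasDerivAt
      (f := fun s => ∑ q, a (G (ε, s)) q * fderiv ℝ G (ε, s) (1, 0) q)
      (fun s _ => ?_) (hint1.add hint2)
    have h := MME.aux_dA a ha G hG (ε, s)
    rwa [hkey (ε, s)] at h
  have hA0 : fderiv ℝ G (ε, 0) (1, 0) = 0 := by
    have h1 := MME.pd_fst G (ε, 0) (hGd (ε, 0))
    have h2 : (fun e : ℝ => G (e, (((ε, 0) : ℝ × ℝ)).2)) = fun _ => z0 :=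
      funext fun e => hG0 e
    rw [h2] at h1
    exact h1.unique (hasDerivAt_const _ _)
  rw [hA0] at hFTC
  simp only [Pi.zero_apply, mul_zero, Finset.sum_const_zero, sub_zero] at hFTC
  rw [intervalIntegral.integral_add hint1 hint2] at hFTC
  -- identify the right-hand side integrand
  have hHp_eq : ∀ s : ℝ, deriv (fun e => H e (G (ε, s)) (φ0 + s • αhat)) ε
      = MME.HpFun αhat φ0 H G (ε, s) := by
    intro s
    have hcurve : HasDerivAt
        (fun e => ((e, (G (ε, s), φ0 + s • αhat)) : ℝ × ((Fin N → ℝ) × (Fin ℓ → ℝ))))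
        ((1 : ℝ), (0 : (Fin N → ℝ) × (Fin ℓ → ℝ))) ε :=
      (hasDerivAt_id ε).prodMk (hasDerivAt_const ε (G (ε, s), φ0 + s • αhat))
    have hHd := (hH.differentiable (by simp) ((ε, (G (ε, s), φ0 + s • αhat)))).hasFDerivAt
    exact (hHd.comp_hasDerivAt ε hcurve).deriv
  rw [hd1, hprim.deriv,
    intervalIntegral.integral_congr (g := fun s => MME.HpFun αhat φ0 H G (ε, s))
      (fun s _ => hHp_eq s)]
  linarith [hFTC]

end Aux

/-- the `ε`-component of the moment map of the parametrized flow
is `𝓜^ε(φ_{t,ε}(z,φ), τ(t,ε,φ)) = ∫₀ᵗ ∂_εH_ε(φ_{s,ε}(z,φ), φ+α̂s) ds`, i.e.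
`a(φ_{t,ε})ᵀ ∂_εφ_{t,ε} − ∂_ε p_{t,ε} = ∫₀ᵗ ∂_εH_ε(φ_{s,ε}, φ+α̂s) ds`. -/
theorem moment_map_epsilon_component
    (N ℓ : ℕ) (αhat : Fin ℓ → ℝ)
    (a : (Fin N → ℝ) → (Fin N → ℝ)) (ha : ContDiff ℝ (⊤ : ℕ∞) a)
    (H : ℝ → (Fin N → ℝ) → (Fin ℓ → ℝ) → ℝ)
    (hH : ContDiff ℝ (⊤ : ℕ∞)
      (fun q : ℝ × ((Fin N → ℝ) × (Fin ℓ → ℝ)) => H q.1 q.2.1 q.2.2))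
    (XH : ℝ → (Fin N → ℝ) → (Fin ℓ → ℝ) → (Fin N → ℝ))
    (hXHc : ContDiff ℝ (⊤ : ℕ∞)
      (fun q : ℝ × ((Fin N → ℝ) × (Fin ℓ → ℝ)) => XH q.1 q.2.1 q.2.2))
    (hDH : ∀ (ε : ℝ) (z : Fin N → ℝ) (φv : Fin ℓ → ℝ) (p : Fin N),
      fderiv ℝ (fun z' => H ε z' φv) z (Pi.single p 1)
        = -∑ q, XH ε z φv q * exactOmega a z q p)
    (ev : ℝ → ℝ → ((Fin N → ℝ) × (Fin ℓ → ℝ)) → (Fin N → ℝ))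
    (hev : ContDiff ℝ (⊤ : ℕ∞)
      (fun q : (ℝ × ℝ) × ((Fin N → ℝ) × (Fin ℓ → ℝ)) => ev q.1.1 q.1.2 q.2))
    (h0 : ∀ (ε : ℝ) (x : (Fin N → ℝ) × (Fin ℓ → ℝ)), ev ε 0 x = x.1)
    (hode : ∀ (ε t : ℝ) (x : (Fin N → ℝ) × (Fin ℓ → ℝ)),
      HasDerivAt (fun s => ev ε s x) (XH ε (ev ε t x) (x.2 + t • αhat)) t) :
    ∀ (ε t : ℝ) (x : (Fin N → ℝ) × (Fin ℓ → ℝ)),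
      (∑ q, a (ev ε t x) q * (deriv (fun e => ev e t x) ε) q)
        - deriv (fun e => primFnE αhat a XH H ev e t x) ε
      = ∫ s in (0:ℝ)..t,
          deriv (fun e => H e (ev ε s x) (x.2 + s • αhat)) ε := by
  intro ε t x
  have hG : ContDiff ℝ (⊤ : ℕ∞) (fun p : ℝ × ℝ => ev p.1 p.2 x) :=
    hev.comp (contDiff_id.prodMk contDiff_const)
  have hGX : ∀ p : ℝ × ℝ, fderiv ℝ (fun p : ℝ × ℝ => ev p.1 p.2 x) p (0, 1)
      = XH p.1 (ev p.1 p.2 x) (x.2 + p.2 • αhat) := by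
    intro p
    have h1 := MME.pd_snd (fun p : ℝ × ℝ => ev p.1 p.2 x) p
      (hG.differentiable (by simp) p)
    exact h1.unique (hode p.1 p.2 x)
  have := MME.main_core αhat x.2 a ha H hH XH hXHc hDH
    (fun p : ℝ × ℝ => ev p.1 p.2 x) hG hGX x.1 (fun e => h0 e x) ε t
  exact this
end
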